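/- arXiv:1903.04301 — 6 statements merged into one kernel-verified Lean document; each statement's English description precedes it below -/
import Mathlib

section
/- Let (Ω,Σ,μ) be a nonatomic finite measure space and let n be a natural number. If K is a nonempty decomposable subset of L¹(μ,ℝⁿ) (the space of equivalence classes of Bochner integrable functions from Ω to ℝⁿ), then the set {∫ f dμ : f ∈ K} is a convex subset of ℝⁿ. -/
open MeasureTheory TopologicalSpace
open scoped Classical

noncomputable section

/-- A finite measure is *nonatomic* if every measurable set of positive measure
contains a measurable subset of strictly smaller positive measure. -/
def Nonatomic {Ω : Type*} [MeasurableSpace Ω] (μ : Measure Ω) : Prop :=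
  ∀ A : Set Ω, MeasurableSet A → 0 < μ A →
    ∃ B ⊆ A, MeasurableSet B ∧ 0 < μ B ∧ μ B < μ A

/-- A subset `K` of `L¹(μ,E)` is *decomposable* if for all `f, g ∈ K` and measurable `A`,
the function `χ_A f + (1 - χ_A) g` (equal to `f` on `A` and to `g` off `A`) belongs to `K`. -/
def Decomposable {Ω E : Type*} [MeasurableSpace Ω] [NormedAddCommGroup E]
    (μ : Measure Ω) (K : Set (Lp E 1 μ)) : Prop :=
  ∀ f ∈ K, ∀ g ∈ K, ∀ A : Set Ω, MeasurableSet A →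
    ∀ h : Lp E 1 μ, (h : Ω → E) =ᵐ[μ] A.piecewise (f : Ω → E) (g : Ω → E) → h ∈ K

open Set
open scoped ENNReal

section Auxiliary
variable {Ω : Type*} [MeasurableSpace Ω] {μ : Measure Ω} [IsFiniteMeasure μ]

lemma Nonatomic.exists_le_half (hna : Nonatomic μ) {E : Set Ω} (hE : MeasurableSet E)
    (hpos : 0 < μ E) : ∃ B ⊆ E, MeasurableSet B ∧ 0 < μ B ∧ μ B ≤ μ E / 2 := by
  obtain ⟨B, hBE, hBm, hB0, hBlt⟩ := hna E hE hpos
  rcases le_or_gt (μ B) (μ E / 2) with h | h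
  · exact ⟨B, hBE, hBm, hB0, h⟩
  · refine ⟨E \ B, diff_subset, hE.diff hBm, ?_, ?_⟩
    · rw [measure_diff hBE hBm.nullMeasurableSet (measure_ne_top μ B)]
      exact tsub_pos_of_lt hBlt
    · rw [measure_diff hBE hBm.nullMeasurableSet (measure_ne_top μ B)]
      calc μ E - μ B ≤ μ E - μ E / 2 := tsub_le_tsub_left h.le _
        _ = μ E / 2 := ENNReal.sub_half (measure_ne_top μ E)

lemma Nonatomic.exists_pos_le (hna : Nonatomic μ) {E : Set Ω} (hE : MeasurableSet E)
    (hpos : 0 < μ E) {c : ℝ≥0∞} (hc : 0 < c) :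
    ∃ B ⊆ E, MeasurableSet B ∧ 0 < μ B ∧ μ B ≤ c := by
  -- iterate halving
  have key : ∀ k : ℕ, ∃ B ⊆ E, MeasurableSet B ∧ 0 < μ B ∧ μ B ≤ μ E / 2 ^ k := by
    intro k
    induction k with
    | zero => exact ⟨E, subset_rfl, hE, hpos, by simp⟩
    | succ k ih =>
      obtain ⟨B, hBE, hBm, hB0, hBle⟩ := ih
      obtain ⟨C, hCB, hCm, hC0, hCle⟩ := hna.exists_le_half hBm hB0
      refine ⟨C, hCB.trans hBE, hCm, hC0, hCle.trans ?_⟩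
      have h2 : μ E / 2 ^ (k + 1) = μ E / 2 ^ k / 2 := by
        rw [pow_succ, div_eq_mul_inv, div_eq_mul_inv, div_eq_mul_inv,
          ENNReal.mul_inv (Or.inl (by simp)) (Or.inl (by simp)), mul_assoc]
      rw [h2]
      exact ENNReal.div_le_div_right hBle 2
  obtain ⟨k, hk⟩ : ∃ k : ℕ, μ E / 2 ^ k ≤ c := by
    rcases eq_or_ne c ∞ with rfl | hctop
    · exact ⟨0, le_top⟩
    have hμc : μ E / c ≠ ∞ := (ENNReal.div_lt_top (measure_ne_top μ E) hc.ne').ne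
    obtain ⟨n, hn⟩ := ENNReal.exists_nat_gt hμc
    refine ⟨n, ?_⟩
    have hcast : (n : ℝ≥0∞) ≤ 2 ^ n := by
      exact_mod_cast (Nat.lt_two_pow_self (n := n)).le
    have h2n : μ E ≤ 2 ^ n * c := by
      calc μ E = μ E / c * c := (ENNReal.div_mul_cancel hc.ne' hctop).symm
        _ ≤ n * c := by gcongr <;> exact hn.le
        _ ≤ 2 ^ n * c := by gcongr
    rw [ENNReal.div_le_iff (by positivity) (by simp)]
    rwa [mul_comm]
  obtain ⟨B, h1, h2, h3, h4⟩ := key k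
  exact ⟨B, h1, h2, h3, h4.trans hk⟩

/-- greedy step -/
lemma exists_greedy_step (E : Set Ω) (c : ℝ≥0∞) (hc : c ≠ ∞) (S : Set Ω) :
    ∃ B, MeasurableSet B ∧ B ⊆ E \ S ∧ μ B ≤ c - μ S ∧
      ∀ C, MeasurableSet C → C ⊆ E \ S → μ C ≤ c - μ S → μ C ≤ 2 * μ B := by
  set 𝒞 : Set (Set Ω) := {C | MeasurableSet C ∧ C ⊆ E \ S ∧ μ C ≤ c - μ S} with h𝒞
  set s : ℝ≥0∞ := ⨆ C ∈ 𝒞, μ C with hs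
  have hsle : s ≤ c - μ S := iSup_le fun C => iSup_le fun hC => hC.2.2
  rcases eq_or_ne s 0 with h0 | h0
  · refine ⟨∅, MeasurableSet.empty, empty_subset _, by simp, fun C hC1 hC2 hC3 => ?_⟩
    have : μ C ≤ s := le_biSup _ (⟨hC1, hC2, hC3⟩ : C ∈ 𝒞)
    simpa [h0] using this
  · have hstop : s ≠ ∞ := (hsle.trans_lt (lt_of_le_of_lt tsub_le_self hc.lt_top)).ne
    have hlt : s / 2 < s := ENNReal.half_lt_self h0 hstop
    obtain ⟨B, hB, hBs⟩ : ∃ B ∈ 𝒞, s / 2 < μ B := by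
      by_contra hcon
      push_neg at hcon
      have : s ≤ s / 2 := iSup₂_le fun C hC => hcon C hC
      exact absurd this (not_le.mpr hlt)
    refine ⟨B, hB.1, hB.2.1, hB.2.2, fun C hC1 hC2 hC3 => ?_⟩
    have h1 : μ C ≤ s := le_biSup _ (⟨hC1, hC2, hC3⟩ : C ∈ 𝒞)
    calc μ C ≤ s := h1
      _ = 2 * (s / 2) := by rw [ENNReal.mul_div_cancel (by simp) (by simp)]
      _ ≤ 2 * μ B := mul_le_mul_right hBs.le 2

/-- Sierpiński: a nonatomic finite measure attains every intermediate value. -/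
theorem Nonatomic.exists_subset_measure_eq (hna : Nonatomic μ) {E : Set Ω}
    (hE : MeasurableSet E) {c : ℝ≥0∞} (hc : c ≤ μ E) :
    ∃ A, A ⊆ E ∧ MeasurableSet A ∧ μ A = c := by
  have hctop : c ≠ ∞ := (hc.trans_lt (measure_lt_top μ E)).ne
  -- the greedy sequence
  let P : Set Ω → Prop := fun S => MeasurableSet S ∧ S ⊆ E ∧ μ S ≤ c
  let next : {S // P S} → {S // P S} := fun S =>
    let B := (exists_greedy_step (μ := μ) E c hctop S.1).choose
    have hB := (exists_greedy_step (μ := μ) E c hctop S.1).choose_spec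
    ⟨S.1 ∪ B, S.2.1.union hB.1,
      union_subset S.2.2.1 (hB.2.1.trans diff_subset),
      by
        refine le_trans (measure_union_le _ _) ?_
        calc μ S.1 + μ B ≤ μ S.1 + (c - μ S.1) := by gcongr; exact hB.2.2.1
          _ = c := add_tsub_cancel_of_le S.2.2.2⟩
  let seq : ℕ → {S // P S} := fun k => Nat.rec ⟨∅, MeasurableSet.empty, empty_subset E, by simp⟩
    (fun _ S => next S) k
  have seq_succ : ∀ k, seq (k + 1) = next (seq k) := fun k => rfl
  have seq_mono : ∀ k, (seq k).1 ⊆ (seq (k + 1)).1 := fun k => subset_union_left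
  set A : Set Ω := ⋃ k, (seq k).1 with hA
  have hAm : MeasurableSet A := MeasurableSet.iUnion fun k => (seq k).2.1
  have hAE : A ⊆ E := iUnion_subset fun k => (seq k).2.2.1
  have hAc : μ A ≤ c := by
    refine le_of_tendsto' (tendsto_measure_iUnion_atTop (monotone_nat_of_le_succ seq_mono)) ?_
    exact fun k => (seq k).2.2.2
  refine ⟨A, hAE, hAm, ?_⟩
  by_contra hne
  have hlt : μ A < c := lt_of_le_of_ne hAc hne
  -- find a small candidate set C inside E \ A
  have hEA : 0 < μ (E \ A) := by
    rw [measure_diff hAE hAm.nullMeasurableSet (measure_ne_top μ A)]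
    exact tsub_pos_of_lt (lt_of_lt_of_le hlt hc)
  obtain ⟨C, hCE, hCm, hC0, hCle⟩ :=
    hna.exists_pos_le (hE.diff hAm) hEA (tsub_pos_of_lt hlt)
  -- C is a candidate at every stage
  have hcand : ∀ k, μ C ≤ 2 * μ ((exists_greedy_step (μ := μ) E c hctop (seq k).1).choose) := by
    intro k
    have hspec := (exists_greedy_step (μ := μ) E c hctop (seq k).1).choose_spec
    refine hspec.2.2.2 C hCm ?_ ?_
    · refine hCE.trans (diff_subset_diff_right ?_)
      exact subset_iUnion (fun k => (seq k).1) k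
    · exact hCle.trans (tsub_le_tsub_left (measure_mono (subset_iUnion (fun k => (seq k).1) k)) c)
  -- additivity along the sequence
  have hadd : ∀ k, μ (seq (k + 1)).1 = μ (seq k).1
      + μ ((exists_greedy_step (μ := μ) E c hctop (seq k).1).choose) := by
    intro k
    have hspec := (exists_greedy_step (μ := μ) E c hctop (seq k).1).choose_spec
    rw [seq_succ]
    exact measure_union (disjoint_sdiff_right.mono_right hspec.2.1) hspec.1
  have hgrow : ∀ k : ℕ, (k : ℝ≥0∞) * (μ C / 2) ≤ μ (seq k).1 := by
    intro k
    induction k with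
    | zero => simp
    | succ k ih =>
      rw [hadd k]
      push_cast
      rw [add_mul, one_mul]
      have hhalf : μ C / 2 ≤ μ ((exists_greedy_step (μ := μ) E c hctop (seq k).1).choose) := by
        have := hcand k
        rw [mul_comm] at this
        exact ENNReal.div_le_of_le_mul this
      exact add_le_add ih hhalf
  -- contradiction: μ (seq k) ≤ c < ∞ but grows linearly
  have hCp : 0 < μ C / 2 := ENNReal.div_pos hC0.ne' (by simp)
  obtain ⟨k, hk⟩ := ENNReal.exists_nat_gt (ENNReal.div_lt_top hctop hCp.ne').ne
  have : (k : ℝ≥0∞) * (μ C / 2) ≤ c := (hgrow k).trans (seq k).2.2.2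
  have hcontr : c < (k : ℝ≥0∞) * (μ C / 2) := by
    rw [← ENNReal.div_lt_iff (Or.inl hCp.ne') (Or.inl ((lt_of_le_of_lt
      (le_trans (ENNReal.half_le_self) le_rfl) (measure_lt_top μ C)).ne))]
    exact hk
  exact absurd this (not_le.mpr hcontr)

/-- dyadic family built from a halving operator -/
def dyadicFam (half : Set Ω → Set Ω) (E : Set Ω) : ℕ → ℕ → Set Ω
  | 0, j => if j = 0 then ∅ else E
  | (k+1), j =>
      if j % 2 = 0 then dyadicFam half E k (j / 2)
      else dyadicFam half E k (j / 2) ∪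
        half (dyadicFam half E k (j / 2 + 1) \ dyadicFam half E k (j / 2))

lemma dyadicFam_even (half : Set Ω → Set Ω) (E : Set Ω) (k m : ℕ) :
    dyadicFam half E (k+1) (2*m) = dyadicFam half E k m := by
  have h1 : (2*m) % 2 = 0 := by omega
  have h2 : (2*m) / 2 = m := by omega
  simp [dyadicFam, h1, h2]

lemma dyadicFam_odd (half : Set Ω → Set Ω) (E : Set Ω) (k m : ℕ) :
    dyadicFam half E (k+1) (2*m+1) = dyadicFam half E k m ∪
      half (dyadicFam half E k (m + 1) \ dyadicFam half E k m) := by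
  have h1 : (2*m+1) % 2 = 1 := by omega
  have h2 : (2*m+1) / 2 = m := by omega
  simp [dyadicFam, h1, h2]

variable {n : ℕ}

/-- Invariants of the dyadic family. -/
lemma dyadicFam_spec (f : Fin n → Ω → ℝ) (hf : ∀ i, Integrable (f i) μ)
    (half : Set Ω → Set Ω)
    (hhalf : ∀ S, MeasurableSet S → half S ⊆ S ∧ MeasurableSet (half S) ∧
      μ (half S) = μ S / 2 ∧ ∀ i, ∫ x in half S, f i x ∂μ = (∫ x in S, f i x ∂μ) / 2)
    {E : Set Ω} (hE : MeasurableSet E) :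
    ∀ k, (∀ j, MeasurableSet (dyadicFam half E k j)) ∧
      (∀ j, dyadicFam half E k j ⊆ dyadicFam half E k (j+1)) ∧
      (∀ j, 2^k ≤ j → dyadicFam half E k j = E) ∧
      (∀ j, dyadicFam half E k j ⊆ E) ∧
      (∀ j, j ≤ 2^k → μ (dyadicFam half E k j) = ENNReal.ofReal ((j:ℝ)/2^k) * μ E) ∧
      (∀ j, j ≤ 2^k → ∀ i, ∫ x in dyadicFam half E k j, f i x ∂μ
          = ((j:ℝ)/2^k) * ∫ x in E, f i x ∂μ) := by
  intro k
  induction k with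
  | zero =>
    refine ⟨fun j => ?_, fun j => ?_, fun j hj => ?_, fun j => ?_, fun j hj => ?_, fun j hj => ?_⟩
    · by_cases h : j = 0 <;> simp [dyadicFam, h, hE]
    · by_cases h : j = 0 <;> simp [dyadicFam, h]
    · have : j ≠ 0 := by omega
      simp [dyadicFam, this]
    · by_cases h : j = 0 <;> simp [dyadicFam, h]
    · interval_cases j <;> simp [dyadicFam]
    · interval_cases j <;> simp [dyadicFam]
  | succ k ih =>
    obtain ⟨ihm, ihmono, ihtop, ihE, ihμ, ihint⟩ := ih
    have hmono' : ∀ {a b}, a ≤ b → dyadicFam half E k a ⊆ dyadicFam half E k b := by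
      intro a b hab
      induction hab with
      | refl => exact subset_rfl
      | step _ ih2 => exact ih2.trans (ihmono _)
    have hannm : ∀ m, MeasurableSet (dyadicFam half E k (m+1) \ dyadicFam half E k m) :=
      fun m => (ihm (m+1)).diff (ihm m)
    have parity : ∀ j : ℕ, (∃ m, j = 2*m) ∨ (∃ m, j = 2*m+1) := by
      intro j
      rcases Nat.even_or_odd j with ⟨m, hm⟩ | ⟨m, hm⟩
      · exact Or.inl ⟨m, by omega⟩
      · exact Or.inr ⟨m, by omega⟩
    refine ⟨fun j => ?_, fun j => ?_, fun j hj => ?_, fun j => ?_, fun j hj => ?_, fun j hj => ?_⟩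
    · rcases parity j with ⟨m, rfl⟩ | ⟨m, rfl⟩
      · rw [dyadicFam_even]; exact ihm m
      · rw [dyadicFam_odd]
        exact (ihm m).union (hhalf _ (hannm m)).2.1
    · rcases parity j with ⟨m, rfl⟩ | ⟨m, rfl⟩
      · rw [dyadicFam_even, (by omega : 2*m+1 = 2*m+1), dyadicFam_odd]
        exact subset_union_left
      · rw [dyadicFam_odd, (by omega : 2*m+1+1 = 2*(m+1)), dyadicFam_even]
        exact union_subset (ihmono m) (((hhalf _ (hannm m)).1).trans diff_subset)
    · rcases parity j with ⟨m, rfl⟩ | ⟨m, rfl⟩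
      · rw [dyadicFam_even]
        exact ihtop m (by rw [pow_succ] at hj; omega)
      · rw [dyadicFam_odd]
        have hm : 2^k ≤ m := by rw [pow_succ] at hj; omega
        refine Subset.antisymm (union_subset (ihE m)
          (((hhalf _ (hannm m)).1).trans (diff_subset.trans (ihE (m+1))))) ?_
        calc E = dyadicFam half E k m := (ihtop m hm).symm
          _ ⊆ _ := subset_union_left
    · rcases parity j with ⟨m, rfl⟩ | ⟨m, rfl⟩
      · rw [dyadicFam_even]; exact ihE m
      · rw [dyadicFam_odd]
        exact union_subset (ihE m) (((hhalf _ (hannm m)).1).trans (diff_subset.trans (ihE (m+1))))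
    · rcases parity j with ⟨m, rfl⟩ | ⟨m, rfl⟩
      · rw [dyadicFam_even, ihμ m (by rw [pow_succ] at hj; omega)]
        congr 2
        push_cast
        rw [pow_succ]
        field_simp
      · have hm1 : m + 1 ≤ 2^k := by rw [pow_succ] at hj; omega
        have hm : m ≤ 2^k := by omega
        rw [dyadicFam_odd]
        have hdisj : Disjoint (dyadicFam half E k m)
            (half (dyadicFam half E k (m+1) \ dyadicFam half E k m)) :=
          disjoint_sdiff_right.mono_right (hhalf _ (hannm m)).1
        rw [measure_union hdisj (hhalf _ (hannm m)).2.1, (hhalf _ (hannm m)).2.2.1,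
          measure_diff (ihmono m) (ihm m).nullMeasurableSet (measure_ne_top μ _),
          ihμ _ hm1, ihμ _ hm]
        rw [← ENNReal.sub_mul (fun _ _ => measure_ne_top μ E),
          ← ENNReal.ofReal_sub _ (by positivity)]
        have heq : ((m:ℝ)+1)/2^k - (m:ℝ)/2^k = 1/2^k := by ring
        push_cast
        rw [heq]
        rw [mul_comm (ENNReal.ofReal (1/2^k)) (μ E), mul_div_assoc,
          ← ENNReal.ofReal_ofNat 2, ← ENNReal.ofReal_div_of_pos (by norm_num),
          mul_comm (μ E) _, ← add_mul, ← ENNReal.ofReal_add (by positivity) (by positivity)]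
        congr 2
        rw [pow_succ]
        field_simp
    · intro i
      rcases parity j with ⟨m, rfl⟩ | ⟨m, rfl⟩
      · rw [dyadicFam_even, ihint m (by rw [pow_succ] at hj; omega) i]
        congr 1
        push_cast
        rw [pow_succ]
        field_simp
      · have hm1 : m + 1 ≤ 2^k := by rw [pow_succ] at hj; omega
        have hm : m ≤ 2^k := by omega
        rw [dyadicFam_odd]
        have hdisj : Disjoint (dyadicFam half E k m)
            (half (dyadicFam half E k (m+1) \ dyadicFam half E k m)) :=
          disjoint_sdiff_right.mono_right (hhalf _ (hannm m)).1
        rw [setIntegral_union hdisj (hhalf _ (hannm m)).2.1 ((hf i).integrableOn)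
          ((hf i).integrableOn), (hhalf _ (hannm m)).2.2.2 i,
          integral_diff (ihm m) ((hf i).integrableOn) (ihmono m),
          ihint _ hm1 i, ihint _ hm i]
        push_cast
        rw [pow_succ]
        field_simp
        ring

/-- From a halving oracle, build a filtration realizing every proportion `s ∈ [0,1]`. -/
lemma exists_filtration (f : Fin n → Ω → ℝ) (hf : ∀ i, Integrable (f i) μ)
    (H : ∀ E : Set Ω, MeasurableSet E → ∃ A, A ⊆ E ∧ MeasurableSet A ∧ μ A = μ E / 2 ∧
      ∀ i, ∫ x in A, f i x ∂μ = (∫ x in E, f i x ∂μ) / 2)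
    {E : Set Ω} (hE : MeasurableSet E) :
    ∃ F : ℝ → Set Ω, (∀ s, MeasurableSet (F s)) ∧ (∀ s, F s ⊆ E) ∧
      (∀ s t : ℝ, s ≤ t → F s ⊆ F t) ∧
      (∀ s : ℝ, 0 ≤ s → s ≤ 1 → μ (F s) = ENNReal.ofReal s * μ E) ∧
      (∀ s : ℝ, 0 ≤ s → s ≤ 1 → ∀ i, ∫ x in F s, f i x ∂μ = s * ∫ x in E, f i x ∂μ) := by
  set half : Set Ω → Set Ω := fun S => if h : MeasurableSet S then (H S h).choose else ∅ with hhalfdef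
  have hhalf : ∀ S, MeasurableSet S → half S ⊆ S ∧ MeasurableSet (half S) ∧
      μ (half S) = μ S / 2 ∧ ∀ i, ∫ x in half S, f i x ∂μ = (∫ x in S, f i x ∂μ) / 2 := by
    intro S hS
    have h := (H S hS).choose_spec
    simp only [hhalfdef, dif_pos hS]
    exact h
  have spec := dyadicFam_spec f hf half hhalf hE
  set Φ : ℕ → ℕ → Set Ω := dyadicFam half E with hΦ
  have hmono : ∀ k a b, a ≤ b → Φ k a ⊆ Φ k b := by
    intro k a b hab
    induction hab with
    | refl => exact subset_rfl
    | step _ ih2 => exact ih2.trans ((spec k).2.1 _)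
  set jk : ℝ → ℕ → ℕ := fun s k => ⌊s * 2^k⌋₊ with hjk
  set F : ℝ → Set Ω := fun s => ⋃ k, Φ k (jk s k) with hF
  have hkmono : ∀ s, Monotone fun k => Φ k (jk s k) := by
    intro s
    refine monotone_nat_of_le_succ fun k => ?_
    have h2j : 2 * jk s k ≤ jk s (k+1) := by
      rcases le_or_gt 0 s with hs | hs
      · have h0 : (0:ℝ) ≤ s * 2^k := by positivity
        refine Nat.le_floor ?_
        push_cast
        have := Nat.floor_le h0
        calc 2 * (⌊s * 2^k⌋₊ : ℝ) ≤ 2 * (s * 2^k) := by linarith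
          _ = s * 2^(k+1) := by ring
      · have e1 : jk s k = 0 := Nat.floor_of_nonpos (by nlinarith [pow_pos (by norm_num : (0:ℝ) < 2) k])
        simp [e1]
    calc Φ k (jk s k) = Φ (k+1) (2 * jk s k) := (dyadicFam_even half E k _).symm
      _ ⊆ Φ (k+1) (jk s (k+1)) := hmono _ _ _ h2j
  have hjle : ∀ s : ℝ, s ≤ 1 → ∀ k, jk s k ≤ 2^k := by
    intro s hs k
    refine Nat.floor_le_of_le ?_
    calc s * 2^k ≤ 1 * 2^k := by nlinarith [pow_pos (by norm_num : (0:ℝ) < 2) k]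
      _ = ((2^k : ℕ) : ℝ) := by push_cast; ring
  have hratio : ∀ s : ℝ, 0 ≤ s →
      Filter.Tendsto (fun k => (jk s k : ℝ) / 2^k) Filter.atTop (nhds s) := by
    intro s hs
    have hup : ∀ k, (jk s k : ℝ) / 2^k ≤ s := by
      intro k
      rw [div_le_iff₀ (by positivity)]
      exact Nat.floor_le (by positivity)
    have hlow : ∀ k, s - (1/2)^k ≤ (jk s k : ℝ) / 2^k := by
      intro k
      rw [sub_le_iff_le_add, div_add' _ _ _ (by positivity : (2:ℝ)^k ≠ 0)]
      rw [le_div_iff₀ (by positivity)]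
      have h1 : s * 2^k < ⌊s * 2^k⌋₊ + 1 := Nat.lt_floor_add_one _
      have h2 : (1/2:ℝ)^k * 2^k = 1 := by
        rw [← mul_pow]; norm_num
      nlinarith
    have hlowlim : Filter.Tendsto (fun k : ℕ => s - (1/2:ℝ)^k) Filter.atTop (nhds s) := by
      have := tendsto_pow_atTop_nhds_zero_of_lt_one (by norm_num : (0:ℝ) ≤ 1/2)
        (by norm_num : (1/2:ℝ) < 1)
      simpa using (tendsto_const_nhds (x := s)).sub this
    exact tendsto_of_tendsto_of_tendsto_of_le_of_le hlowlim tendsto_const_nhds hlow hup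
  refine ⟨F, fun s => MeasurableSet.iUnion fun k => (spec k).1 _,
    fun s => iUnion_subset fun k => (spec k).2.2.2.1 _, ?_, ?_, ?_⟩
  · intro s t hst
    refine iUnion_subset fun k => subset_iUnion_of_subset k (hmono k _ _ ?_)
    exact Nat.floor_mono (by nlinarith [pow_pos (by norm_num : (0:ℝ) < 2) k])
  · intro s hs0 hs1
    have h1 : Filter.Tendsto (fun k => μ (Φ k (jk s k))) Filter.atTop (nhds (μ (F s))) :=
      tendsto_measure_iUnion_atTop (hkmono s)
    have h2 : Filter.Tendsto (fun k => μ (Φ k (jk s k))) Filter.atTop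
        (nhds (ENNReal.ofReal s * μ E)) := by
      have heq : ∀ k, μ (Φ k (jk s k)) = ENNReal.ofReal ((jk s k : ℝ)/2^k) * μ E :=
        fun k => (spec k).2.2.2.2.1 _ (hjle s hs1 k)
      simp only [heq]
      refine ENNReal.Tendsto.mul_const ?_ (Or.inr (measure_ne_top μ E))
      exact (ENNReal.continuous_ofReal.tendsto s).comp (hratio s hs0)
    exact tendsto_nhds_unique h1 h2
  · intro s hs0 hs1 i
    have h1 : Filter.Tendsto (fun k => ∫ x in Φ k (jk s k), f i x ∂μ) Filter.atTop
        (nhds (∫ x in F s, f i x ∂μ)) :=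
      tendsto_setIntegral_of_monotone (fun k => (spec k).1 _) (hkmono s) (hf i).integrableOn
    have h2 : Filter.Tendsto (fun k => ∫ x in Φ k (jk s k), f i x ∂μ) Filter.atTop
        (nhds (s * ∫ x in E, f i x ∂μ)) := by
      have heq : ∀ k, ∫ x in Φ k (jk s k), f i x ∂μ = ((jk s k : ℝ)/2^k) * ∫ x in E, f i x ∂μ :=
        fun k => (spec k).2.2.2.2.2 _ (hjle s hs1 k) i
      simp only [heq]
      exact (hratio s hs0).mul_const _
    exact tendsto_nhds_unique h1 h2

/-- absolute continuity of the integral -/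
lemma abscont {h : Ω → ℝ} (hh : Integrable h μ) {ε : ℝ} (hε : 0 < ε) :
    ∃ δ : ℝ≥0∞, 0 < δ ∧ ∀ T : Set Ω, μ T < δ → |∫ x in T, h x ∂μ| < ε := by
  obtain ⟨δ, hδ0, hδ⟩ := exists_pos_setLIntegral_lt_of_measure_lt (μ := μ)
    (f := fun x => (‖h x‖₊ : ℝ≥0∞)) hh.2.ne (ENNReal.ofReal_pos.mpr hε).ne'
  refine ⟨δ, hδ0, fun T hT => ?_⟩
  have h1 : (‖∫ x in T, h x ∂μ‖₊ : ℝ≥0∞) ≤ ∫⁻ x in T, ‖h x‖₊ ∂μ :=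
    enorm_integral_le_lintegral_enorm _
  have h2 := (h1.trans_lt (hδ T hT))
  have h3 : ‖∫ x in T, h x ∂μ‖ < ε := by
    have := ENNReal.toReal_lt_toReal (by simp) (by simp [ENNReal.ofReal_ne_top]) |>.mpr h2
    rwa [ENNReal.coe_toReal, coe_nnnorm, ENNReal.toReal_ofReal hε.le] at this
  rwa [Real.norm_eq_abs] at h3

/-- The exchange step: given a set halving `μ` and the integrals of the family `g`, and on
which the integral of `h` is at least half, produce a set halving everything including `h`. -/
lemma halving_step (g : Fin n → Ω → ℝ) (hg : ∀ i, Integrable (g i) μ) {h : Ω → ℝ}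
    (hh : Integrable h μ)
    (IH : ∀ E' : Set Ω, MeasurableSet E' → ∃ A, A ⊆ E' ∧ MeasurableSet A ∧ μ A = μ E' / 2 ∧
      ∀ i, ∫ x in A, g i x ∂μ = (∫ x in E', g i x ∂μ) / 2)
    {E A : Set Ω} (hE : MeasurableSet E) (hAE : A ⊆ E) (hAm : MeasurableSet A)
    (hAμ : μ A = μ E / 2) (hAg : ∀ i, ∫ x in A, g i x ∂μ = (∫ x in E, g i x ∂μ) / 2)
    (hd : (∫ x in E, h x ∂μ) / 2 ≤ ∫ x in A, h x ∂μ) :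
    ∃ D, D ⊆ E ∧ MeasurableSet D ∧ μ D = μ E / 2 ∧
      (∫ x in D, h x ∂μ = (∫ x in E, h x ∂μ) / 2) ∧
      ∀ i, ∫ x in D, g i x ∂μ = (∫ x in E, g i x ∂μ) / 2 := by
  set A' : Set Ω := E \ A with hA'
  have hA'm : MeasurableSet A' := hE.diff hAm
  have hA'μ : μ A' = μ E / 2 := by
    rw [hA', measure_diff hAE hAm.nullMeasurableSet (measure_ne_top μ A), hAμ,
      ENNReal.sub_half (measure_ne_top μ E)]
  have hA'int : ∀ (u : Ω → ℝ), Integrable u μ →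
      ∫ x in A', u x ∂μ = ∫ x in E, u x ∂μ - ∫ x in A, u x ∂μ := fun u hu =>
    integral_diff hAm hu.integrableOn hAE
  have hA'g : ∀ i, ∫ x in A', g i x ∂μ = (∫ x in E, g i x ∂μ) / 2 := by
    intro i
    rw [hA'int _ (hg i), hAg i]; ring
  have hA'h : ∫ x in A', h x ∂μ ≤ (∫ x in E, h x ∂μ) / 2 := by
    rw [hA'int _ hh]; linarith
  -- filtrations of A and A'
  obtain ⟨B, hBm, hBsub, hBmono, hBμ, hBg⟩ := exists_filtration g hg IH hAm
  obtain ⟨C, hCm, hCsub, hCmono, hCμ, hCg⟩ := exists_filtration g hg IH hA'm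
  have hAA' : Disjoint A A' := disjoint_sdiff_right
  have hdisj : ∀ s t : ℝ, Disjoint (A \ B s) (C t) := fun s t =>
    hAA'.mono diff_subset (hCsub t)
  set D : ℝ → Set Ω := fun s => (A \ B s) ∪ C s with hD
  have hDm : ∀ s, MeasurableSet (D s) := fun s => (hAm.diff (hBm s)).union (hCm s)
  have hDE : ∀ s, D s ⊆ E := fun s =>
    union_subset (diff_subset.trans hAE) ((hCsub s).trans diff_subset)
  set ψ : ℝ → ℝ := fun s => ∫ x in D s, h x ∂μ with hψ
  have hψeq : ∀ s, ψ s = ∫ x in A, h x ∂μ - ∫ x in B s, h x ∂μ + ∫ x in C s, h x ∂μ := by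
    intro s
    rw [hψ]
    simp only [hD]
    rw [setIntegral_union (hdisj s s) (hCm s) hh.integrableOn hh.integrableOn,
      integral_diff (hBm s) hh.integrableOn (hBsub s)]
  -- continuity of ψ on [0,1]
  have hψcont : ContinuousOn ψ (Icc (0:ℝ) 1) := by
    rw [Metric.continuousOn_iff]
    intro b hb ε hε
    obtain ⟨δ, hδ0, hδ⟩ := abscont hh (half_pos hε)
    set δ₂ : ℝ≥0∞ := min δ 1 with hδ₂
    have hδ₂0 : 0 < δ₂ := lt_min hδ0 (by norm_num)
    have hδ₂top : δ₂ ≠ ∞ := ((min_le_right _ _).trans_lt (by norm_num)).ne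
    set M : ℝ≥0∞ := μ univ + 1 with hM
    have hM0 : M ≠ 0 := by simp [hM]
    have hMtop : M ≠ ∞ := by simp [hM, measure_ne_top]
    set r : ℝ := (δ₂ / M).toReal with hr
    have hr0 : 0 < r := ENNReal.toReal_pos (ENNReal.div_pos hδ₂0.ne' hMtop).ne'
      (ENNReal.div_lt_top hδ₂top hM0).ne
    have hsmall : ∀ (F : ℝ → Set Ω) (W : Set Ω), (∀ s, MeasurableSet (F s)) →
        (∀ s t : ℝ, s ≤ t → F s ⊆ F t) →
        (∀ s : ℝ, 0 ≤ s → s ≤ 1 → μ (F s) = ENNReal.ofReal s * μ W) →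
        ∀ u v : ℝ, u ∈ Icc (0:ℝ) 1 → v ∈ Icc (0:ℝ) 1 → u ≤ v → v - u < r →
          |∫ x in F v, h x ∂μ - ∫ x in F u, h x ∂μ| < ε / 2 := by
      intro F W hFm hFmono hFμ u v hu hv huv hclose
      have hsub : F u ⊆ F v := hFmono u v huv
      have hdiffint : ∫ x in F v \ F u, h x ∂μ
          = ∫ x in F v, h x ∂μ - ∫ x in F u, h x ∂μ :=
        integral_diff (hFm u) hh.integrableOn hsub
      have hμdiff : μ (F v \ F u) < δ := by
        rw [measure_diff hsub (hFm u).nullMeasurableSet (measure_ne_top μ _),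
          hFμ v hv.1 hv.2, hFμ u hu.1 hu.2,
          ← ENNReal.sub_mul (fun _ _ => measure_ne_top μ W),
          ← ENNReal.ofReal_sub _ hu.1]
        have h1 : ENNReal.ofReal (v - u) < δ₂ / M := by
          have hfin : δ₂ / M ≠ ∞ := (ENNReal.div_lt_top hδ₂top hM0).ne
          rw [← ENNReal.ofReal_toReal hfin]
          exact (ENNReal.ofReal_lt_ofReal_iff (by rw [← hr]; exact hr0)).mpr (by rwa [← hr])
        calc ENNReal.ofReal (v - u) * μ W ≤ ENNReal.ofReal (v - u) * M := by
              gcongr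
              calc μ W ≤ μ univ := measure_mono (subset_univ W)
                _ ≤ M := by rw [hM]; exact le_self_add
          _ < δ₂ / M * M := by
              rw [mul_comm _ M, mul_comm (δ₂ / M) M]; refine ENNReal.mul_lt_mul_right hM0 hMtop ?_
              exact h1
          _ = δ₂ := ENNReal.div_mul_cancel hM0 hMtop
          _ ≤ δ := min_le_left _ _
      rw [← hdiffint]
      exact hδ _ hμdiff
    refine ⟨r, hr0, fun a ha hab => ?_⟩
    rw [Real.dist_eq] at hab
    have habs := abs_lt.mp hab
    rw [Real.dist_eq, hψeq a, hψeq b]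
    rcases le_total a b with hab' | hab'
    · have e1 := hsmall B A hBm hBmono hBμ a b ha hb hab' (by linarith)
      have e2 := hsmall C A' hCm hCmono hCμ a b ha hb hab' (by linarith)
      calc |(∫ x in A, h x ∂μ - ∫ x in B a, h x ∂μ + ∫ x in C a, h x ∂μ)
            - (∫ x in A, h x ∂μ - ∫ x in B b, h x ∂μ + ∫ x in C b, h x ∂μ)|
          ≤ |∫ x in B b, h x ∂μ - ∫ x in B a, h x ∂μ|
            + |∫ x in C b, h x ∂μ - ∫ x in C a, h x ∂μ| := by
            rw [abs_sub_comm (∫ x in C b, h x ∂μ) _]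
            exact (abs_add_le _ _).trans_eq' (by ring_nf)
        _ < ε / 2 + ε / 2 := add_lt_add e1 e2
        _ = ε := by ring
    · have e1 := hsmall B A hBm hBmono hBμ b a hb ha hab' (by
        have := abs_lt.mp hab; linarith)
      have e2 := hsmall C A' hCm hCmono hCμ b a hb ha hab' (by
        have := abs_lt.mp hab; linarith)
      calc |(∫ x in A, h x ∂μ - ∫ x in B a, h x ∂μ + ∫ x in C a, h x ∂μ)
            - (∫ x in A, h x ∂μ - ∫ x in B b, h x ∂μ + ∫ x in C b, h x ∂μ)|
          ≤ |∫ x in B a, h x ∂μ - ∫ x in B b, h x ∂μ|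
            + |∫ x in C a, h x ∂μ - ∫ x in C b, h x ∂μ| := by
            rw [abs_sub_comm (∫ x in B a, h x ∂μ) _]
            exact (abs_add_le _ _).trans_eq' (by ring_nf)
        _ < ε / 2 + ε / 2 := add_lt_add e1 e2
        _ = ε := by ring
  -- endpoints
  have hB0 : μ (B 0) = 0 := by
    have := hBμ 0 le_rfl zero_le_one
    simpa using this
  have hC0 : μ (C 0) = 0 := by
    have := hCμ 0 le_rfl zero_le_one
    simpa using this
  have hψ0 : ψ 0 = ∫ x in A, h x ∂μ := by
    rw [hψeq 0, setIntegral_measure_zero _ hB0, setIntegral_measure_zero _ hC0]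
    ring
  have hBA : ∫ x in B 1, h x ∂μ = ∫ x in A, h x ∂μ := by
    refine setIntegral_congr_set ?_
    rw [MeasureTheory.ae_eq_set]
    constructor
    · exact measure_mono_null (diff_subset_diff_left (hBsub 1)) (by simp)
    · rw [measure_diff (hBsub 1) (hBm 1).nullMeasurableSet (measure_ne_top μ _),
        hBμ 1 zero_le_one le_rfl]
      simp
  have hCA : ∫ x in C 1, h x ∂μ = ∫ x in A', h x ∂μ := by
    refine setIntegral_congr_set ?_
    rw [MeasureTheory.ae_eq_set]
    constructor
    · exact measure_mono_null (diff_subset_diff_left (hCsub 1)) (by simp)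
    · rw [measure_diff (hCsub 1) (hCm 1).nullMeasurableSet (measure_ne_top μ _),
        hCμ 1 zero_le_one le_rfl]
      simp
  have hψ1 : ψ 1 = ∫ x in A', h x ∂μ := by
    rw [hψeq 1, hBA, hCA]
    ring
  -- IVT
  have hIVT : (∫ x in E, h x ∂μ) / 2 ∈ ψ '' Icc (0:ℝ) 1 := by
    have := intermediate_value_Icc' (by norm_num : (0:ℝ) ≤ 1) hψcont
    refine this ?_
    rw [hψ0, hψ1]
    exact ⟨hA'h, hd⟩
  obtain ⟨s, hs, hψs⟩ := hIVT
  refine ⟨D s, hDE s, hDm s, ?_, hψs, ?_⟩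
  · -- measure of D s
    have hBsA : μ (B s) = ENNReal.ofReal s * μ A := hBμ s hs.1 hs.2
    have hle : ENNReal.ofReal s * μ A ≤ μ A := by
      calc ENNReal.ofReal s * μ A ≤ ENNReal.ofReal 1 * μ A :=
            mul_le_mul_left (ENNReal.ofReal_le_ofReal hs.2) _
        _ = μ A := by simp
    rw [measure_union ((hdisj s s).mono_left subset_rfl) (hCm s),
      measure_diff (hBsub s) (hBm s).nullMeasurableSet (measure_ne_top μ _), hBsA,
      hCμ s hs.1 hs.2, hA'μ, ← hAμ]
    rw [hAμ] at hle ⊢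
    rw [tsub_add_cancel_iff_le.mpr]
    exact hle
  · -- integrals of g
    intro i
    rw [setIntegral_union (hdisj s s) (hCm s) (hg i).integrableOn (hg i).integrableOn,
      integral_diff (hBm s) (hg i).integrableOn (hBsub s),
      hBg s hs.1 hs.2 i, hCg s hs.1 hs.2 i, hAg i, hA'g i]
    ring


/-- **Simultaneous halving**: a measurable set can be split in two halves which halve the measure
and the integral of each of finitely many integrable functions. -/
theorem exists_halving (hna : Nonatomic μ) :
    ∀ (n : ℕ) (f : Fin n → Ω → ℝ), (∀ i, Integrable (f i) μ) →
      ∀ E : Set Ω, MeasurableSet E →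
        ∃ A, A ⊆ E ∧ MeasurableSet A ∧ μ A = μ E / 2 ∧
          ∀ i, ∫ x in A, f i x ∂μ = (∫ x in E, f i x ∂μ) / 2 := by
  intro n
  induction n with
  | zero =>
    intro f hf E hE
    obtain ⟨A, hAE, hAm, hAμ⟩ := hna.exists_subset_measure_eq hE
      (ENNReal.half_le_self (a := μ E))
    exact ⟨A, hAE, hAm, hAμ, fun i => i.elim0⟩
  | succ n ih =>
    intro f hf E hE
    set g : Fin n → Ω → ℝ := fun i => f i.succ with hgdef
    have hg : ∀ i, Integrable (g i) μ := fun i => hf i.succ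
    have hh : Integrable (f 0) μ := hf 0
    have IH := ih g hg
    obtain ⟨A, hAE, hAm, hAμ, hAg⟩ := IH E hE
    rcases le_total ((∫ x in E, f 0 x ∂μ) / 2) (∫ x in A, f 0 x ∂μ) with hcase | hcase
    · obtain ⟨D, h1, h2, h3, h4, h5⟩ := halving_step g hg hh IH hE hAE hAm hAμ hAg hcase
      refine ⟨D, h1, h2, h3, fun i => ?_⟩
      refine Fin.cases ?_ (fun j => ?_) i
      · exact h4
      · exact h5 j
    · -- use the complement
      set A' : Set Ω := E \ A with hA'def
      have hA'E : A' ⊆ E := diff_subset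
      have hA'm : MeasurableSet A' := hE.diff hAm
      have hA'μ : μ A' = μ E / 2 := by
        rw [hA'def, measure_diff hAE hAm.nullMeasurableSet (measure_ne_top μ A), hAμ,
          ENNReal.sub_half (measure_ne_top μ E)]
      have hA'g : ∀ i, ∫ x in A', g i x ∂μ = (∫ x in E, g i x ∂μ) / 2 := by
        intro i
        rw [hA'def, integral_diff hAm (hg i).integrableOn hAE, hAg i]; ring
      have hA'h : (∫ x in E, f 0 x ∂μ) / 2 ≤ ∫ x in A', f 0 x ∂μ := by
        rw [hA'def, integral_diff hAm hh.integrableOn hAE]; linarith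
      obtain ⟨D, h1, h2, h3, h4, h5⟩ := halving_step g hg hh IH hE hA'E hA'm hA'μ hA'g hA'h
      refine ⟨D, h1, h2, h3, fun i => ?_⟩
      refine Fin.cases ?_ (fun j => ?_) i
      · exact h4
      · exact h5 j

/-- **Lyapunov-type theorem for densities**: every proportion of the integrals can be realized. -/
theorem exists_proportion (hna : Nonatomic μ) (n : ℕ) (f : Fin n → Ω → ℝ)
    (hf : ∀ i, Integrable (f i) μ) {t : ℝ} (ht0 : 0 ≤ t) (ht1 : t ≤ 1) :
    ∃ A : Set Ω, MeasurableSet A ∧ ∀ i, ∫ x in A, f i x ∂μ = t * ∫ x, f i x ∂μ := by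
  obtain ⟨F, hFm, _, _, _, hFint⟩ := exists_filtration f hf
    (fun E hE => exists_halving hna n f hf E hE) MeasurableSet.univ
  refine ⟨F t, hFm t, fun i => ?_⟩
  rw [hFint t ht0 ht1 i, setIntegral_univ]


end Auxiliary

set_option maxHeartbeats 1000000 in
/-- **Olech's theorem (convexity part).** If `(Ω,Σ,μ)` is a nonatomic finite measure space
and `K` is a nonempty decomposable subset of `L¹(μ,ℝⁿ)`, then `{∫ f dμ : f ∈ K}` is convex. -/
theorem convex_integral_of_decomposable_nonatomic_euclidean
    {Ω : Type*} [MeasurableSpace Ω] (μ : Measure Ω) [IsFiniteMeasure μ]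
    (n : ℕ) (hna : Nonatomic μ)
    (K : Set (Lp (EuclideanSpace ℝ (Fin n)) 1 μ)) (hKne : K.Nonempty)
    (hdec : Decomposable μ K) :
    Convex ℝ {x : EuclideanSpace ℝ (Fin n) |
      ∃ f ∈ K, ∫ ω, (f : Ω → EuclideanSpace ℝ (Fin n)) ω ∂μ = x} := by
  rintro x ⟨f, hfK, hfx⟩ y ⟨g, hgK, hgy⟩ a b ha hb hab
  have hfi : Integrable (f : Ω → EuclideanSpace ℝ (Fin n)) μ := L1.integrable_coeFn f
  have hgi : Integrable (g : Ω → EuclideanSpace ℝ (Fin n)) μ := L1.integrable_coeFn g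
  set φ : Fin n → Ω → ℝ := fun i ω =>
    EuclideanSpace.proj i ((f : Ω → EuclideanSpace ℝ (Fin n)) ω)
      - EuclideanSpace.proj i ((g : Ω → EuclideanSpace ℝ (Fin n)) ω) with hφdef
  have hpf : ∀ i : Fin n, Integrable (fun ω =>
      EuclideanSpace.proj i ((f : Ω → EuclideanSpace ℝ (Fin n)) ω)) μ := fun i =>
    ContinuousLinearMap.integrable_comp (EuclideanSpace.proj (𝕜 := ℝ) i) hfi
  have hpg : ∀ i : Fin n, Integrable (fun ω =>
      EuclideanSpace.proj i ((g : Ω → EuclideanSpace ℝ (Fin n)) ω)) μ := fun i =>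
    ContinuousLinearMap.integrable_comp (EuclideanSpace.proj (𝕜 := ℝ) i) hgi
  have hφ : ∀ i, Integrable (φ i) μ := fun i => (hpf i).sub (hpg i)
  obtain ⟨A, hAm, hA⟩ := exists_proportion hna n φ hφ ha (by linarith)
  set FF : Ω → EuclideanSpace ℝ (Fin n) :=
    A.piecewise (f : Ω → EuclideanSpace ℝ (Fin n)) (g : Ω → EuclideanSpace ℝ (Fin n)) with hFF
  have hFFi : Integrable FF μ := by
    rw [hFF, ← Set.indicator_add_compl_eq_piecewise]
    exact (hfi.indicator hAm).add (hgi.indicator hAm.compl)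
  have hmem : MemLp FF 1 μ := memLp_one_iff_integrable.mpr hFFi
  set h : Lp (EuclideanSpace ℝ (Fin n)) 1 μ := hmem.toLp FF with hh
  have hcoe : (h : Ω → EuclideanSpace ℝ (Fin n)) =ᵐ[μ] FF := hmem.coeFn_toLp
  have hhK : h ∈ K := hdec f hfK g hgK A hAm h hcoe
  refine ⟨h, hhK, ?_⟩
  have hinth : ∫ ω, (h : Ω → EuclideanSpace ℝ (Fin n)) ω ∂μ = ∫ ω, FF ω ∂μ :=
    integral_congr_ae hcoe
  rw [hinth, hFF, integral_piecewise hAm hfi.integrableOn hgi.integrableOn]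
  -- reduce to a single vector identity
  have hsplit : ∫ ω in Aᶜ, (g : Ω → EuclideanSpace ℝ (Fin n)) ω ∂μ
      = ∫ ω, (g : Ω → EuclideanSpace ℝ (Fin n)) ω ∂μ
        - ∫ ω in A, (g : Ω → EuclideanSpace ℝ (Fin n)) ω ∂μ := by
    rw [← integral_add_compl hAm hgi]
    abel
  rw [hsplit, hgy]
  have hkey : ∫ ω in A, (f : Ω → EuclideanSpace ℝ (Fin n)) ω ∂μ
      - ∫ ω in A, (g : Ω → EuclideanSpace ℝ (Fin n)) ω ∂μ = a • (x - y) := by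
    refine PiLp.ext fun i => ?_
    have hL : (∫ ω in A, (f : Ω → EuclideanSpace ℝ (Fin n)) ω ∂μ
        - ∫ ω in A, (g : Ω → EuclideanSpace ℝ (Fin n)) ω ∂μ) i
        = EuclideanSpace.proj (𝕜 := ℝ) i (∫ ω in A, (f : Ω → EuclideanSpace ℝ (Fin n)) ω ∂μ)
          - EuclideanSpace.proj (𝕜 := ℝ) i (∫ ω in A, (g : Ω → EuclideanSpace ℝ (Fin n)) ω ∂μ) :=
      rfl
    have hR : (a • (x - y)) i = a * (EuclideanSpace.proj (𝕜 := ℝ) i x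
        - EuclideanSpace.proj (𝕜 := ℝ) i y) := rfl
    rw [hL, hR]
    rw [← ContinuousLinearMap.integral_comp_comm _ hfi.integrableOn,
      ← ContinuousLinearMap.integral_comp_comm _ hgi.integrableOn,
      ← integral_sub (hpf i).integrableOn (hpg i).integrableOn]
    have hxI : EuclideanSpace.proj (𝕜 := ℝ) i x
        = ∫ ω, EuclideanSpace.proj i ((f : Ω → EuclideanSpace ℝ (Fin n)) ω) ∂μ := by
      rw [← hfx]
      exact (ContinuousLinearMap.integral_comp_comm _ hfi).symm
    have hyI : EuclideanSpace.proj (𝕜 := ℝ) i y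
        = ∫ ω, EuclideanSpace.proj i ((g : Ω → EuclideanSpace ℝ (Fin n)) ω) ∂μ := by
      rw [← hgy]
      exact (ContinuousLinearMap.integral_comp_comm _ hgi).symm
    rw [hxI, hyI, ← integral_sub (hpf i) (hpg i)]
    exact hA i
  have hfinal : ∫ ω in A, (f : Ω → EuclideanSpace ℝ (Fin n)) ω ∂μ
      + (y - ∫ ω in A, (g : Ω → EuclideanSpace ℝ (Fin n)) ω ∂μ) = a • x + b • y := by
    have hb' : b = 1 - a := by linarith
    rw [hb', sub_smul, one_smul]
    have := hkey
    rw [smul_sub] at this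
    have h2 : ∫ ω in A, (f : Ω → EuclideanSpace ℝ (Fin n)) ω ∂μ
        = a • x - a • y + ∫ ω in A, (g : Ω → EuclideanSpace ℝ (Fin n)) ω ∂μ := by
      rw [← this]; abel
    rw [h2]
    abel
  exact hfinal
end
end

section
/- Let (Ω,Σ,μ) be a complete finite measure space and E an infinite-dimensional separable Banach space. If every μ-continuous countably additive vector measure m : Σ → E has a range m(Σ) that is convex and weakly compact in E, then (Ω,Σ,μ) is saturated. -/
open MeasureTheory TopologicalSpace
open scoped Classical

noncomputable section

lemma aux_exists_ne_zero_ker {E : Type*} [NormedAddCommGroup E] [NormedSpace ℝ E]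
    (hinf : ¬ FiniteDimensional ℝ E) (l : List (E →L[ℝ] ℝ)) :
    ∃ x : E, x ≠ 0 ∧ ∀ f ∈ l, f x = 0 := by
  classical
  set n := l.length
  let Φ : E →ₗ[ℝ] (Fin n → ℝ) := LinearMap.pi (fun i => (l.get i : E →L[ℝ] ℝ).toLinearMap)
  by_cases hker : ∃ x : E, x ≠ 0 ∧ Φ x = 0
  · obtain ⟨x, hx0, hx⟩ := hker
    refine ⟨x, hx0, fun f hf => ?_⟩
    obtain ⟨i, hi⟩ := List.mem_iff_get.mp hf
    have h2 := congrFun hx i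
    simp only [Φ, LinearMap.pi_apply, ContinuousLinearMap.coe_coe, Pi.zero_apply] at h2
    rw [← hi]
    simpa using h2
  · push_neg at hker
    have hinj : Function.Injective Φ := by
      rw [← LinearMap.ker_eq_bot]
      rw [Submodule.eq_bot_iff]
      intro x hx
      by_contra hx0
      exact (hker x hx0) (by simpa using hx)
    exact absurd (FiniteDimensional.of_injective Φ hinj) hinf

lemma aux_biorth_seq {E : Type*} [NormedAddCommGroup E] [NormedSpace ℝ E]
    (hinf : ¬ FiniteDimensional ℝ E) :
    ∃ (X : ℕ → E) (f : ℕ → E →L[ℝ] ℝ),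
      (∀ n, X n ≠ 0) ∧ (∀ n, f n (X n) = ‖X n‖) ∧ ∀ i n, i < n → f i (X n) = 0 := by
  classical
  have hstep : ∀ l : List (E × (E →L[ℝ] ℝ)), ∃ q : E × (E →L[ℝ] ℝ),
      q.1 ≠ 0 ∧ (∀ p ∈ l, p.2 q.1 = 0) ∧ q.2 q.1 = ‖q.1‖ := by
    intro l
    obtain ⟨x, hx0, hx⟩ := aux_exists_ne_zero_ker hinf (l.map Prod.snd)
    obtain ⟨g, _, hg⟩ := exists_dual_vector ℝ x (norm_ne_zero_iff.mpr hx0)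
    exact ⟨(x, g), hx0, fun p hp => hx p.2 (List.mem_map_of_mem (f := Prod.snd) hp), by simpa using hg⟩
  choose st h1 h2 h3 using hstep
  let L : ℕ → List (E × (E →L[ℝ] ℝ)) := fun n => Nat.rec [] (fun _ ih => ih ++ [st ih]) n
  have hLsucc : ∀ n, L (n + 1) = L n ++ [st (L n)] := fun n => rfl
  have hmem : ∀ i n, i < n → st (L i) ∈ L n := by
    intro i n hin
    induction n with
    | zero => omega
    | succ k ih =>
      rw [hLsucc k, List.mem_append]
      rcases Nat.lt_succ_iff_lt_or_eq.mp hin with h | h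
      · exact Or.inl (ih h)
      · subst h; exact Or.inr (List.mem_singleton_self _)
  exact ⟨fun n => (st (L n)).1, fun n => (st (L n)).2, fun n => h1 _,
    fun n => h3 _, fun i n hin => h2 (L n) _ (hmem i n hin)⟩

lemma aux_frac_le_one {s t : ℝ} (ht : 0 ≤ t) (h : s ≤ 1 + t) : (1 + t)⁻¹ * s ≤ 1 := by
  have h1 : (0:ℝ) < 1 + t := by linarith
  have := mul_le_mul_of_nonneg_left h (inv_nonneg.mpr h1.le)
  simpa [inv_mul_cancel₀ h1.ne'] using this

/-- A finite measure space is *saturated* if for every measurable set `S` of positive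
measure, the space `L¹` of real-valued integrable functions with respect to the measure
restricted to `S` is not separable. -/
def Saturated {Ω : Type*} [MeasurableSpace Ω] (μ : Measure Ω) : Prop :=
  ∀ S : Set Ω, MeasurableSet S → 0 < μ S →
    ¬ TopologicalSpace.SeparableSpace (Lp ℝ 1 (μ.restrict S))

set_option maxHeartbeats 2000000 in
/-- **Converse Lyapunov theorem (Khan–Sagara).** If `E` is an infinite-dimensional separable
Banach space and every `μ`-continuous countably additive vector measure `m : Σ → E` has
convex weakly compact range, then `(Ω,Σ,μ)` is saturated. -/
theorem saturated_of_convex_weaklyCompact_range_vectorMeasure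
    {Ω : Type*} [MeasurableSpace Ω] (μ : Measure Ω) [IsFiniteMeasure μ] [μ.IsComplete]
    {E : Type*} [NormedAddCommGroup E] [NormedSpace ℝ E] [CompleteSpace E]
    [TopologicalSpace.SeparableSpace E]
    (hinf : ¬ FiniteDimensional ℝ E)
    (h : ∀ m : VectorMeasure Ω E, (∀ A : Set Ω, MeasurableSet A → μ A = 0 → m A = 0) →
      Convex ℝ ((⇑m) '' {A : Set Ω | MeasurableSet A}) ∧
        IsCompact ((toWeakSpace ℝ E) '' ((⇑m) '' {A : Set Ω | MeasurableSet A}))) :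
    Saturated μ := by
  intro S hS hμS hsep
  set ν := μ.restrict S with hνdef
  haveI : Nonempty (Lp ℝ 1 ν) := ⟨0⟩
  set g : ℕ → Lp ℝ 1 ν := denseSeq (Lp ℝ 1 ν) with hgdef
  have hg : DenseRange g := denseRange_denseSeq _
  have hint : ∀ n, Integrable (g n : Ω → ℝ) ν := fun n => L1.integrable_coeFn (g n)
  obtain ⟨X, f, hX0, hfX, htri⟩ := aux_biorth_seq hinf
  set a : ℕ → ℝ := fun n => (1/2)^n * (1 + ‖g n‖)⁻¹ * (1 + ‖X n‖)⁻¹ with hadef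
  have hgnorm_nonneg : ∀ n, (0:ℝ) ≤ ‖g n‖ := fun n => norm_nonneg _
  have ha : ∀ n, 0 < a n := by
    intro n
    have h1 : (0:ℝ) < 1 + ‖g n‖ := by have := hgnorm_nonneg n; linarith
    have h2 : (0:ℝ) < 1 + ‖X n‖ := by have := norm_nonneg (X n); linarith
    positivity
  set c : Set Ω → ℕ → ℝ := fun A n => ∫ x in A, (g n : Ω → ℝ) x ∂ν with hcdef
  -- basic bound on the coefficients
  have hcabs : ∀ (A : Set Ω) n, |c A n| ≤ ∫ x in A, ‖(g n : Ω → ℝ) x‖ ∂ν := by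
    intro A n
    simpa [Real.norm_eq_abs, hcdef] using norm_integral_le_integral_norm
      (μ := ν.restrict A) (f := (g n : Ω → ℝ))
  have hsetnorm : ∀ (A : Set Ω) n, ∫ x in A, ‖(g n : Ω → ℝ) x‖ ∂ν ≤ ‖g n‖ := by
    intro A n
    have h1 : ∫ x in A, ‖(g n : Ω → ℝ) x‖ ∂ν ≤ ∫ x, ‖(g n : Ω → ℝ) x‖ ∂ν :=
      setIntegral_le_integral (hint n).norm (Filter.Eventually.of_forall fun x => norm_nonneg _)
    rw [L1.norm_eq_integral_norm]
    exact h1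
  have hcbound : ∀ (A : Set Ω) n, |c A n| ≤ 1 + ‖g n‖ := by
    intro A n
    have := (hcabs A n).trans (hsetnorm A n)
    linarith
  -- the bound on the terms of the series
  have htermle : ∀ (n : ℕ) (s : ℝ), |s| ≤ 1 + ‖g n‖ → ‖(a n * s) • X n‖ ≤ (1/2)^n := by
    intro n s hs
    have h2 : (0:ℝ) < 1 + ‖X n‖ := by have := norm_nonneg (X n); linarith
    rw [norm_smul, Real.norm_eq_abs, abs_mul, abs_of_pos (ha n), hadef]
    have e1 : (1/2:ℝ)^n * (1 + ‖g n‖)⁻¹ * (1 + ‖X n‖)⁻¹ * |s| * ‖X n‖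
        = (1/2)^n * ((1 + ‖g n‖)⁻¹ * |s|) * ((1 + ‖X n‖)⁻¹ * ‖X n‖) := by ring
    rw [e1]
    have b1 : (1 + ‖g n‖)⁻¹ * |s| ≤ 1 := aux_frac_le_one (hgnorm_nonneg n) hs
    have b2 : (1 + ‖X n‖)⁻¹ * ‖X n‖ ≤ 1 := aux_frac_le_one (norm_nonneg _) (by linarith)
    have p1 : (0:ℝ) ≤ (1 + ‖g n‖)⁻¹ * |s| := by positivity
    have p2 : (0:ℝ) ≤ (1 + ‖X n‖)⁻¹ * ‖X n‖ := by positivity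
    calc (1/2:ℝ)^n * ((1 + ‖g n‖)⁻¹ * |s|) * ((1 + ‖X n‖)⁻¹ * ‖X n‖)
        ≤ (1/2:ℝ)^n * 1 * 1 := by
          apply mul_le_mul (mul_le_mul le_rfl b1 p1 (by positivity)) b2 p2 (by positivity)
      _ = (1/2:ℝ)^n := by ring
  have hterm : ∀ (A : Set Ω) n, ‖(a n * c A n) • X n‖ ≤ (1/2)^n := fun A n =>
    htermle n _ (hcbound A n)
  have hsum : ∀ A : Set Ω, Summable (fun n => (a n * c A n) • X n) := by
    intro A
    apply Summable.of_norm
    exact Summable.of_nonneg_of_le (fun n => norm_nonneg _) (hterm A) summable_geometric_two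
  set mfun : Set Ω → E := fun A =>
    if MeasurableSet A then ∑' n, (a n * c A n) • X n else 0 with hmfundef
  have hmfun_meas : ∀ (A : Set Ω), MeasurableSet A → mfun A = ∑' n, (a n * c A n) • X n := by
    intro A hA; simp [hmfundef, hA]
  -- the vector measure
  have hempty : mfun ∅ = 0 := by
    have : ∀ n, c ∅ n = 0 := by intro n; simp [hcdef]
    simp [hmfundef, this]
  have hmiUnion : ∀ ⦃A : ℕ → Set Ω⦄, (∀ i, MeasurableSet (A i)) → Pairwise (Function.onFun Disjoint A) →
      HasSum (fun i => mfun (A i)) (mfun (⋃ i, A i)) := by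
    intro A hA hd
    set U := ⋃ i, A i with hUdef
    have hU : MeasurableSet U := MeasurableSet.iUnion hA
    have hHS : ∀ n, HasSum (fun i => c (A i) n) (c U n) := fun n =>
      hasSum_integral_iUnion hA hd ((hint n).integrableOn)
    have habs : ∀ n, HasSum (fun i => ∫ x in A i, ‖(g n : Ω → ℝ) x‖ ∂ν)
        (∫ x in U, ‖(g n : Ω → ℝ) x‖ ∂ν) := fun n =>
      hasSum_integral_iUnion hA hd ((hint n).norm.integrableOn)
    have hcsum : ∀ n, Summable fun i => |c (A i) n| := by
      intro n
      exact Summable.of_nonneg_of_le (fun i => abs_nonneg _) (fun i => hcabs (A i) n)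
        (habs n).summable
    have hcsum_le : ∀ n, ∑' i, |c (A i) n| ≤ 1 + ‖g n‖ := by
      intro n
      have h1 : ∑' i, |c (A i) n| ≤ ∑' i, ∫ x in A i, ‖(g n : Ω → ℝ) x‖ ∂ν :=
        Summable.tsum_le_tsum (fun i => hcabs (A i) n) (hcsum n) (habs n).summable
      rw [(habs n).tsum_eq] at h1
      have := hsetnorm U n
      linarith
    set F : ℕ × ℕ → E := fun p => (a p.1 * c (A p.2) p.1) • X p.1 with hFdef
    have hFnorm : ∀ p : ℕ × ℕ, ‖F p‖ = (a p.1 * ‖X p.1‖) * |c (A p.2) p.1| := by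
      intro p
      rw [hFdef]
      simp only [norm_smul, Real.norm_eq_abs, abs_mul, abs_of_pos (ha p.1)]
      ring
    have hFnormsum : Summable fun p : ℕ × ℕ => ‖F p‖ := by
      rw [summable_prod_of_nonneg (fun p => norm_nonneg (F p))]
      constructor
      · intro n
        have : Summable fun i => (a n * ‖X n‖) * |c (A i) n| := (hcsum n).mul_left _
        exact this.congr fun i => (hFnorm (n, i)).symm
      · apply Summable.of_nonneg_of_le (fun n => tsum_nonneg fun i => norm_nonneg _)
          (fun n => ?_) summable_geometric_two
        have h1 : ∑' i, ‖F (n, i)‖ = (a n * ‖X n‖) * ∑' i, |c (A i) n| := by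
          rw [← tsum_mul_left]
          exact tsum_congr fun i => hFnorm (n, i)
        rw [h1]
        have h2 : (a n * ‖X n‖) * ∑' i, |c (A i) n|
            = ‖(a n * (∑' i, |c (A i) n|)) • X n‖ := by
          rw [norm_smul, Real.norm_eq_abs, abs_mul, abs_of_pos (ha n),
            abs_of_nonneg (tsum_nonneg fun i => abs_nonneg _)]
          ring
        rw [h2]
        exact htermle n _ (by
          rw [abs_of_nonneg (tsum_nonneg fun i => abs_nonneg _)]
          exact hcsum_le n)
    have hFsum : Summable F := Summable.of_norm hFnormsum
    have htsumF : ∑' p, F p = mfun U := by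
      rw [Summable.tsum_prod' hFsum (fun n => (hFsum.prod_factor n))]
      rw [hmfun_meas U hU]
      apply tsum_congr
      intro n
      have : HasSum (fun i => (a n * c (A i) n) • X n) ((a n * c U n) • X n) :=
        ((hHS n).mul_left (a n)).smul_const (X n)
      exact this.tsum_eq
    have hF' : Summable fun p : ℕ × ℕ => F p.swap := hFsum.prod_symm
    have htsumF' : ∑' p : ℕ × ℕ, F p.swap = ∑' p, F p :=
      (Equiv.prodComm ℕ ℕ).tsum_eq F
    have hHSF' : HasSum (fun p : ℕ × ℕ => F p.swap) (mfun U) := by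
      rw [← htsumF, ← htsumF']
      exact hF'.hasSum
    apply hHSF'.prod_fiberwise
    intro i
    rw [hmfun_meas (A i) (hA i)]
    exact (hsum (A i)).hasSum
  set m : VectorMeasure Ω E :=
    { measureOf' := mfun
      empty' := hempty
      not_measurable' := fun A hA => by simp [hmfundef, hA]
      m_iUnion' := hmiUnion } with hmdef
  have hmcoe : ∀ A : Set Ω, m A = mfun A := fun A => rfl
  -- μ-continuity
  have hcont : ∀ A : Set Ω, MeasurableSet A → μ A = 0 → m A = 0 := by
    intro A hA hμA
    have hνA : ν A = 0 := by
      rw [hνdef, Measure.restrict_apply hA]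
      exact measure_mono_null Set.inter_subset_left hμA
    have hc0 : ∀ n, c A n = 0 := by
      intro n
      rw [hcdef]
      simp only
      rw [Measure.restrict_eq_zero.mpr hνA, integral_zero_measure]
    rw [hmcoe, hmfun_meas A hA]
    simp [hc0]
  obtain ⟨hconv, _⟩ := h m hcont
  -- convexity gives a "half" set B
  have h1 : m Set.univ ∈ (⇑m) '' {A : Set Ω | MeasurableSet A} :=
    ⟨Set.univ, MeasurableSet.univ, rfl⟩
  have h0 : (0 : E) ∈ (⇑m) '' {A : Set Ω | MeasurableSet A} :=
    ⟨∅, MeasurableSet.empty, by rw [hmcoe]; exact hempty⟩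
  have hmid : (1/2 : ℝ) • m Set.univ ∈ (⇑m) '' {A : Set Ω | MeasurableSet A} := by
    have := hconv h1 h0 (by norm_num : (0:ℝ) ≤ 1/2) (by norm_num : (0:ℝ) ≤ 1/2) (by norm_num)
    simpa using this
  obtain ⟨B, hB, hmB⟩ := hmid
  have hB' : MeasurableSet B := hB
  -- extract coefficient identities by "triangularity"
  have hkey : ∀ n, c B n = (1/2) * c Set.univ n := by
    intro n
    induction n using Nat.strong_induction_on with
    | _ n ih =>
      have hsummB := hsum B
      have hsummU := hsum Set.univ
      have hfB : f n (m B) = ∑' k, (a k * c B k) * f n (X k) := by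
        rw [hmcoe, hmfun_meas B hB']
        rw [ContinuousLinearMap.map_tsum _ hsummB]
        exact tsum_congr fun k => by rw [(f n).map_smul]; simp [smul_eq_mul]
      have hfU : f n (m Set.univ) = ∑' k, (a k * c Set.univ k) * f n (X k) := by
        rw [hmcoe, hmfun_meas Set.univ MeasurableSet.univ]
        rw [ContinuousLinearMap.map_tsum _ hsummU]
        exact tsum_congr fun k => by rw [(f n).map_smul]; simp [smul_eq_mul]
      have hvanish : ∀ k, n < k → f n (X k) = 0 := fun k hk => htri n k hk
      have hfB' : f n (m B) = ∑ k ∈ Finset.range (n+1), (a k * c B k) * f n (X k) := by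
        rw [hfB]
        apply tsum_eq_sum
        intro k hk
        rw [hvanish k (by simpa using hk)]
        ring
      have hfU' : f n (m Set.univ)
          = ∑ k ∈ Finset.range (n+1), (a k * c Set.univ k) * f n (X k) := by
        rw [hfU]
        apply tsum_eq_sum
        intro k hk
        rw [hvanish k (by simpa using hk)]
        ring
      have heq : f n (m B) = (1/2) * f n (m Set.univ) := by
        rw [hmB, (f n).map_smul]
        simp [smul_eq_mul]
      rw [hfB', hfU'] at heq
      rw [Finset.mul_sum] at heq
      have heq2 : ∑ k ∈ Finset.range (n+1),
          ((a k * c B k) * f n (X k) - (1/2) * ((a k * c Set.univ k) * f n (X k))) = 0 := by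
        rw [Finset.sum_sub_distrib, heq]
        ring
      rw [Finset.sum_range_succ] at heq2
      have hzero : ∀ k ∈ Finset.range n,
          (a k * c B k) * f n (X k) - (1/2) * ((a k * c Set.univ k) * f n (X k)) = 0 := by
        intro k hk
        rw [ih k (Finset.mem_range.mp hk)]
        ring
      rw [Finset.sum_eq_zero hzero, zero_add] at heq2
      have hfnn : f n (X n) ≠ 0 := by
        rw [hfX n]
        simpa using hX0 n
      have han : a n ≠ 0 := (ha n).ne'
      have : a n * (c B n - (1/2) * c Set.univ n) * f n (X n) = 0 := by
        rw [← heq2]; ring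
      rcases mul_eq_zero.mp this with h' | h'
      · rcases mul_eq_zero.mp h' with h'' | h''
        · exact absurd h'' han
        · linarith [h'']
      · exact absurd h' hfnn
  -- density argument
  set T : Lp ℝ 1 ν → ℝ := fun u => (∫ x in B, u x ∂ν) - (1/2) * ∫ x, u x ∂ν with hTdef
  have hTg : ∀ n, T (g n) = 0 := by
    intro n
    have := hkey n
    have hk := hkey n
    rw [hcdef] at hk
    simp only at hk
    rw [setIntegral_univ] at hk
    rw [hTdef]
    simp only
    rw [hk]
    ring
  have hTcont : Continuous T := by
    rw [hTdef]
    apply LipschitzWith.continuous (K := 2)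
    apply LipschitzWith.of_dist_le_mul
    intro u v
    have hsub : Integrable (fun x => (u : Ω → ℝ) x - (v : Ω → ℝ) x) ν :=
      (L1.integrable_coeFn u).sub (L1.integrable_coeFn v)
    have hdist : dist u v = ∫ x, ‖(u : Ω → ℝ) x - (v : Ω → ℝ) x‖ ∂ν := by
      rw [dist_eq_norm, L1.norm_eq_integral_norm (u - v)]
      apply integral_congr_ae
      filter_upwards [Lp.coeFn_sub u v] with x hx
      rw [hx]
      simp
    have e1 : ∫ x in B, (u : Ω → ℝ) x ∂ν - ∫ x in B, (v : Ω → ℝ) x ∂ν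
        = ∫ x in B, ((u : Ω → ℝ) x - (v : Ω → ℝ) x) ∂ν :=
      (integral_sub ((L1.integrable_coeFn u).integrableOn)
        ((L1.integrable_coeFn v).integrableOn)).symm
    have e2 : ∫ x, (u : Ω → ℝ) x ∂ν - ∫ x, (v : Ω → ℝ) x ∂ν
        = ∫ x, ((u : Ω → ℝ) x - (v : Ω → ℝ) x) ∂ν :=
      (integral_sub (L1.integrable_coeFn u) (L1.integrable_coeFn v)).symm
    have b1 : |∫ x in B, ((u : Ω → ℝ) x - (v : Ω → ℝ) x) ∂ν| ≤ dist u v := by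
      rw [hdist]
      calc |∫ x in B, ((u : Ω → ℝ) x - (v : Ω → ℝ) x) ∂ν|
          ≤ ∫ x in B, ‖(u : Ω → ℝ) x - (v : Ω → ℝ) x‖ ∂ν := by
            simpa [Real.norm_eq_abs] using norm_integral_le_integral_norm
              (μ := ν.restrict B) (f := fun x => (u : Ω → ℝ) x - (v : Ω → ℝ) x)
        _ ≤ ∫ x, ‖(u : Ω → ℝ) x - (v : Ω → ℝ) x‖ ∂ν :=
            setIntegral_le_integral hsub.norm (Filter.Eventually.of_forall fun x => norm_nonneg _)
    have b2 : |∫ x, ((u : Ω → ℝ) x - (v : Ω → ℝ) x) ∂ν| ≤ dist u v := by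
      rw [hdist]
      simpa [Real.norm_eq_abs] using norm_integral_le_integral_norm
        (μ := ν) (f := fun x => (u : Ω → ℝ) x - (v : Ω → ℝ) x)
    have : dist ((∫ x in B, (u : Ω → ℝ) x ∂ν) - (1/2) * ∫ x, (u : Ω → ℝ) x ∂ν)
        ((∫ x in B, (v : Ω → ℝ) x ∂ν) - (1/2) * ∫ x, (v : Ω → ℝ) x ∂ν) ≤ (3/2) * dist u v := by
      rw [Real.dist_eq]
      have expand : ((∫ x in B, (u : Ω → ℝ) x ∂ν) - (1/2) * ∫ x, (u : Ω → ℝ) x ∂ν)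
          - ((∫ x in B, (v : Ω → ℝ) x ∂ν) - (1/2) * ∫ x, (v : Ω → ℝ) x ∂ν)
          = (∫ x in B, ((u : Ω → ℝ) x - (v : Ω → ℝ) x) ∂ν)
            - (1/2) * ∫ x, ((u : Ω → ℝ) x - (v : Ω → ℝ) x) ∂ν := by
        rw [← e1, ← e2]; ring
      rw [expand]
      calc |(∫ x in B, ((u : Ω → ℝ) x - (v : Ω → ℝ) x) ∂ν)
            - (1/2) * ∫ x, ((u : Ω → ℝ) x - (v : Ω → ℝ) x) ∂ν|
          ≤ |∫ x in B, ((u : Ω → ℝ) x - (v : Ω → ℝ) x) ∂ν|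
            + (1/2) * |∫ x, ((u : Ω → ℝ) x - (v : Ω → ℝ) x) ∂ν| := by
            have h1 := abs_sub (∫ x in B, ((u : Ω → ℝ) x - (v : Ω → ℝ) x) ∂ν)
              ((1/2) * ∫ x, ((u : Ω → ℝ) x - (v : Ω → ℝ) x) ∂ν)
            rw [abs_mul] at h1
            have h2 : |(1/2 : ℝ)| = 1/2 := by norm_num
            rw [h2] at h1
            exact h1
        _ ≤ dist u v + (1/2) * dist u v := by
            have := b2
            nlinarith [b1, b2, dist_nonneg (x := u) (y := v)]
        _ = (3/2) * dist u v := by ring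
    have hd0 := dist_nonneg (x := u) (y := v)
    calc dist (T u) (T v) = _ := rfl
      _ ≤ (3/2) * dist u v := this
      _ ≤ (2:ℝ) * dist u v := by nlinarith
      _ = ((2 : NNReal) : ℝ) * dist u v := by norm_num
  have hT0 : ∀ u, T u = 0 := by
    intro u
    have hclosed : IsClosed {u : Lp ℝ 1 ν | T u = 0} := isClosed_eq hTcont continuous_const
    have hsubset : Set.range g ⊆ {u : Lp ℝ 1 ν | T u = 0} := by
      rintro _ ⟨n, rfl⟩
      exact hTg n
    have := hclosed.closure_subset_iff.mpr hsubset
    exact this (hg u)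
  -- apply to indicators
  have hνB : ν B ≠ ⊤ := measure_ne_top ν B
  have hνBc : ν Bᶜ ≠ ⊤ := measure_ne_top ν Bᶜ
  have hi1 : T (indicatorConstLp 1 hB' hνB (1:ℝ)) = (1/2) * (ν B).toReal := by
    rw [hTdef]
    simp only
    rw [setIntegral_indicatorConstLp hB' hB' hνB, integral_indicatorConstLp hB' hνB]
    rw [Set.inter_self]
    simp only [smul_eq_mul, mul_one, measureReal_def]
    ring
  have hi2 : T (indicatorConstLp 1 hB'.compl hνBc (1:ℝ)) = - (1/2) * (ν Bᶜ).toReal := by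
    rw [hTdef]
    simp only
    rw [setIntegral_indicatorConstLp hB' hB'.compl hνBc, integral_indicatorConstLp hB'.compl hνBc]
    rw [Set.compl_inter_self]
    simp only [smul_eq_mul, mul_one, measureReal_def, measure_empty, ENNReal.toReal_zero]
    ring
  have hB0 : (ν B).toReal = 0 := by
    have := hT0 (indicatorConstLp 1 hB' hνB (1:ℝ))
    rw [hi1] at this
    linarith
  have hBc0 : (ν Bᶜ).toReal = 0 := by
    have := hT0 (indicatorConstLp 1 hB'.compl hνBc (1:ℝ))
    rw [hi2] at this
    linarith
  have hνB0 : ν B = 0 := by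
    rwa [ENNReal.toReal_eq_zero_iff, or_iff_left hνB] at hB0
  have hνBc0 : ν Bᶜ = 0 := by
    rwa [ENNReal.toReal_eq_zero_iff, or_iff_left hνBc] at hBc0
  have huniv : ν Set.univ = 0 := by
    have : ν Set.univ ≤ ν B + ν Bᶜ := by
      rw [← Set.union_compl_self B]
      exact measure_union_le _ _
    rw [hνB0, hνBc0] at this
    simpa using this
  rw [hνdef, Measure.restrict_apply_univ] at huniv
  rw [huniv] at hμS
  exact lt_irrefl _ hμS
end
end

section
/- Let (Ω,Σ,μ) be a nonatomic complete finite measure space and E a separable Banach space. If K ⊆ L¹(μ,E) is decomposable and closed in the weak topology of L¹(μ,E), then K is convex. -/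
open MeasureTheory TopologicalSpace
open scoped Classical

noncomputable section

open scoped ENNReal

set_option linter.unusedSectionVars false
set_option linter.unusedVariables false

section Aux

variable {Ω : Type*} [MeasurableSpace Ω] {μ : Measure Ω}

/-- halving -/
lemma Nonatomic.exists_half (hna : Nonatomic μ) {P : Set Ω} (hP : MeasurableSet P)
    (hpos : 0 < μ P) (hfin : μ P ≠ ∞) :
    ∃ Q ⊆ P, MeasurableSet Q ∧ 0 < μ Q ∧ μ Q ≤ μ P / 2 := by
  obtain ⟨B, hBP, hBm, hB0, hBlt⟩ := hna P hP hpos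
  have hBfin : μ B ≠ ∞ := (hBlt.trans (lt_top_iff_ne_top.2 hfin)).ne
  have hdiff : μ (P \ B) = μ P - μ B := measure_diff hBP hBm.nullMeasurableSet hBfin
  by_cases hB2 : μ B ≤ μ P / 2
  · exact ⟨B, hBP, hBm, hB0, hB2⟩
  · push_neg at hB2
    refine ⟨P \ B, Set.diff_subset, hP.diff hBm, ?_, ?_⟩
    · rw [hdiff]
      exact tsub_pos_of_lt hBlt
    · rw [hdiff]
      refine tsub_le_iff_right.2 ?_
      calc μ P = μ P / 2 + μ P / 2 := (ENNReal.add_halves _).symm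
        _ ≤ μ P / 2 + μ B := by gcongr

lemma Nonatomic.exists_small (hna : Nonatomic μ) {P : Set Ω} (hP : MeasurableSet P)
    (hpos : 0 < μ P) (hfin : μ P ≠ ∞) {δ : ℝ≥0∞} (hδ : 0 < δ) :
    ∃ Q ⊆ P, MeasurableSet Q ∧ 0 < μ Q ∧ μ Q ≤ δ := by
  have key : ∀ n : ℕ, ∃ Q ⊆ P, MeasurableSet Q ∧ 0 < μ Q ∧ μ Q ≤ μ P / 2 ^ n := by
    intro n
    induction n with
    | zero => exact ⟨P, le_rfl, hP, hpos, by simp⟩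
    | succ n ih =>
      obtain ⟨Q, hQP, hQm, hQ0, hQle⟩ := ih
      have hQfin : μ Q ≠ ∞ := ((measure_mono hQP).trans_lt (lt_top_iff_ne_top.2 hfin)).ne
      obtain ⟨R, hRQ, hRm, hR0, hRle⟩ := hna.exists_half hQm hQ0 hQfin
      refine ⟨R, hRQ.trans hQP, hRm, hR0, hRle.trans ?_⟩
      rw [pow_succ]
      have heq : μ P / (2 ^ n * 2) = μ P / 2 ^ n / 2 := by
        rw [div_eq_mul_inv, div_eq_mul_inv, div_eq_mul_inv,
          ENNReal.mul_inv (Or.inl (by simp)) (Or.inl (by simp)), mul_assoc]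
      rw [heq]
      exact ENNReal.div_le_div_right hQle 2
  -- choose n with μ P / 2 ^ n ≤ δ
  obtain ⟨n, hn⟩ : ∃ n : ℕ, μ P / 2 ^ n ≤ δ := by
    have htend : Filter.Tendsto (fun n : ℕ => μ P / 2 ^ n) Filter.atTop (nhds 0) := by
      have h1 : Filter.Tendsto (fun n : ℕ => (2⁻¹ : ℝ≥0∞) ^ n) Filter.atTop (nhds 0) :=
        ENNReal.tendsto_pow_atTop_nhds_zero_of_lt_one (by
          rw [ENNReal.inv_lt_one]; exact ENNReal.one_lt_two)
      have h2 := ENNReal.Tendsto.const_mul h1 (Or.inr hfin)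
      rw [mul_zero] at h2
      refine h2.congr (fun n => ?_)
      rw [div_eq_mul_inv, ENNReal.inv_pow]
    have := htend.eventually (gt_mem_nhds hδ)
    obtain ⟨n, hn⟩ := this.exists
    exact ⟨n, hn.le⟩
  obtain ⟨Q, hQP, hQm, hQ0, hQle⟩ := key n
  exact ⟨Q, hQP, hQm, hQ0, hQle.trans hn⟩

/-- Sierpiński: nonatomic measures take all intermediate values. -/
lemma Nonatomic.exists_measure_eq (hna : Nonatomic μ) {P : Set Ω} (hP : MeasurableSet P)
    (hfin : μ P ≠ ∞) {c : ℝ≥0∞} (hc : c ≤ μ P) :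
    ∃ Q ⊆ P, MeasurableSet Q ∧ μ Q = c := by
  have hcfin : c ≠ ∞ := (hc.trans_lt (lt_top_iff_ne_top.2 hfin)).ne
  let Good := {Q : Set Ω // Q ⊆ P ∧ MeasurableSet Q ∧ μ Q ≤ c}
  let 𝒟 : Set Ω → Set ℝ≥0∞ := fun Q =>
    {d | ∃ D, D ⊆ P \ Q ∧ MeasurableSet D ∧ μ Q + μ D ≤ c ∧ μ D = d}
  have stepEx : ∀ Q : Good, ∃ Q' : Good, Q.1 ⊆ Q'.1 ∧
      ∀ d ∈ 𝒟 Q.1, μ Q.1 + d / 2 ≤ μ Q'.1 := by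
    rintro ⟨Q, hQP, hQm, hQc⟩
    set S := sSup (𝒟 Q) with hS
    rcases eq_or_ne S 0 with h0 | h0
    · refine ⟨⟨Q, hQP, hQm, hQc⟩, le_rfl, ?_⟩
      intro d hd
      have hdS : d ≤ S := le_sSup hd
      have : d = 0 := le_antisymm (h0 ▸ hdS) zero_le
      simp [this]
    · have hSfin : S ≠ ∞ := by
        refine ne_top_of_le_ne_top hcfin (sSup_le ?_)
        rintro d ⟨D, hD, hDm, hsum, rfl⟩
        exact le_trans le_add_self hsum
      have hhalf : S / 2 < S := ENNReal.half_lt_self h0 hSfin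
      obtain ⟨d, hd, hd2⟩ := lt_sSup_iff.mp hhalf
      obtain ⟨D, hDsub, hDm, hsum, rfl⟩ := hd
      have hdisj : Disjoint Q D :=
        Set.disjoint_of_subset_right hDsub Set.disjoint_sdiff_right
      have hu : μ (Q ∪ D) = μ Q + μ D := measure_union hdisj hDm
      refine ⟨⟨Q ∪ D, Set.union_subset hQP (hDsub.trans Set.diff_subset),
        hQm.union hDm, by rw [hu]; exact hsum⟩, Set.subset_union_left, ?_⟩
      intro d' hd'
      have hd'S : d' ≤ S := le_sSup hd'
      calc μ Q + d' / 2 ≤ μ Q + S / 2 := by gcongr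
        _ ≤ μ Q + μ D := add_le_add le_rfl hd2.le
        _ = μ (Q ∪ D) := hu.symm
  let step : Good → Good := fun Q => (stepEx Q).choose
  have hstep1 : ∀ Q, Q.1 ⊆ (step Q).1 := fun Q => (stepEx Q).choose_spec.1
  have hstep2 : ∀ Q, ∀ d ∈ 𝒟 Q.1, μ Q.1 + d / 2 ≤ μ (step Q).1 :=
    fun Q => (stepEx Q).choose_spec.2
  let Q0 : Good := ⟨∅, Set.empty_subset _, MeasurableSet.empty, by simp⟩
  let seq : ℕ → Good := fun n => step^[n] Q0
  have hseq : ∀ n, seq (n + 1) = step (seq n) := fun n =>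
    Function.iterate_succ_apply' step n Q0
  have hmono : Monotone fun n => (seq n).1 :=
    monotone_nat_of_le_succ (fun n => by rw [hseq]; exact hstep1 _)
  set Qinf := ⋃ n, (seq n).1 with hQinf
  have hQinfP : Qinf ⊆ P := Set.iUnion_subset fun n => (seq n).2.1
  have hQinfm : MeasurableSet Qinf := MeasurableSet.iUnion fun n => (seq n).2.2.1
  have hQinfc : μ Qinf ≤ c := by
    rw [hQinf, hmono.directed_le.measure_iUnion]
    exact iSup_le fun n => (seq n).2.2.2
  refine ⟨Qinf, hQinfP, hQinfm, ?_⟩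
  by_contra hne
  have hlt : μ Qinf < c := lt_of_le_of_ne hQinfc hne
  have hQinffin : μ Qinf ≠ ∞ := (hlt.trans (lt_top_iff_ne_top.2 hcfin)).ne
  have hposrest : 0 < μ (P \ Qinf) := by
    have hdd : μ (P \ Qinf) = μ P - μ Qinf :=
      measure_diff hQinfP hQinfm.nullMeasurableSet hQinffin
    rw [hdd]
    exact tsub_pos_of_lt (hlt.trans_le hc)
  have hrestfin : μ (P \ Qinf) ≠ ∞ :=
    ((measure_mono Set.diff_subset).trans_lt (lt_top_iff_ne_top.2 hfin)).ne
  obtain ⟨D, hDsub, hDm, hD0, hDle⟩ :=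
    hna.exists_small (hP.diff hQinfm) hposrest hrestfin (δ := c - μ Qinf) (tsub_pos_of_lt hlt)
  have hmem : ∀ n, μ D ∈ 𝒟 (seq n).1 := by
    intro n
    refine ⟨D, hDsub.trans (Set.diff_subset_diff_right (hQinf ▸ Set.subset_iUnion (fun k => (seq k).1) n)), hDm, ?_, rfl⟩
    calc μ (seq n).1 + μ D ≤ μ Qinf + (c - μ Qinf) :=
          add_le_add (measure_mono (hQinf ▸ Set.subset_iUnion (fun k => (seq k).1) n)) hDle
      _ = c := add_tsub_cancel_of_le hQinfc
  have hgrow : ∀ n : ℕ, (n : ℝ≥0∞) * (μ D / 2) ≤ μ (seq n).1 := by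
    intro n
    induction n with
    | zero => simp
    | succ n ih =>
      rw [hseq]
      calc ((n + 1 : ℕ) : ℝ≥0∞) * (μ D / 2) = n * (μ D / 2) + μ D / 2 := by push_cast; ring
        _ ≤ μ (seq n).1 + μ D / 2 := by gcongr
        _ ≤ μ (step (seq n)).1 := hstep2 _ _ (hmem n)
  have hbound : ∀ n : ℕ, (n : ℝ≥0∞) * (μ D / 2) ≤ c := fun n =>
    (hgrow n).trans (seq n).2.2.2
  have hD2 : (0 : ℝ≥0∞) < μ D / 2 :=
    ENNReal.div_pos hD0.ne' (by norm_num)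
  have hDfin : μ D ≠ ∞ := ne_top_of_le_ne_top (ne_top_of_le_ne_top hcfin tsub_le_self) hDle
  have hdivfin : c / (μ D / 2) ≠ ∞ := (ENNReal.div_lt_top hcfin hD2.ne').ne
  obtain ⟨n, hn⟩ := ENNReal.exists_nat_gt hdivfin
  have : c < n * (μ D / 2) := by
    rwa [ENNReal.div_lt_iff (Or.inl hD2.ne')
      (Or.inl (ENNReal.div_lt_top hDfin (by norm_num)).ne)] at hn
  exact absurd (hbound n) (not_le.mpr this)


variable {E : Type*} [NormedAddCommGroup E] [NormedSpace ℝ E]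

lemma memLp_ind (u : Lp E 1 μ) (B : Set Ω) (hB : MeasurableSet B) :
    MemLp (B.indicator (u : Ω → E)) 1 μ :=
  MemLp.of_le (Lp.memLp u) ((Lp.aestronglyMeasurable u).indicator hB)
    (Filter.Eventually.of_forall fun x => norm_indicator_le_norm_self _ _)

/-- The element `χ_B • u` of `L¹`. -/
def indLp (u : Lp E 1 μ) (B : Set Ω) (hB : MeasurableSet B) : Lp E 1 μ :=
  (memLp_ind u B hB).toLp _

lemma indLp_coeFn (u : Lp E 1 μ) (B : Set Ω) (hB : MeasurableSet B) :
    indLp u B hB =ᵐ[μ] B.indicator (u : Ω → E) :=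
  MemLp.coeFn_toLp _

lemma indLp_univ (u : Lp E 1 μ) : indLp u Set.univ MeasurableSet.univ = u := by
  rw [indLp, MemLp.toLp_congr (memLp_ind u _ MeasurableSet.univ) (Lp.memLp u)
    (Filter.EventuallyEq.of_eq (Set.indicator_univ _))]
  exact Lp.toLp_coeFn u (Lp.memLp u)

lemma indLp_empty (u : Lp E 1 μ) : indLp u ∅ MeasurableSet.empty = 0 := by
  rw [indLp, MemLp.toLp_congr (memLp_ind u _ MeasurableSet.empty) (MemLp.zero)
    (Filter.EventuallyEq.of_eq (Set.indicator_empty _))]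
  exact MemLp.toLp_zero _

lemma indLp_union (u : Lp E 1 μ) {B C : Set Ω} (hB : MeasurableSet B) (hC : MeasurableSet C)
    (hd : Disjoint B C) :
    indLp u (B ∪ C) (hB.union hC) = indLp u B hB + indLp u C hC := by
  rw [indLp, indLp, indLp, ← MemLp.toLp_add]
  apply MemLp.toLp_congr
  exact Filter.Eventually.of_forall fun x => by
    rw [Set.indicator_union_of_disjoint hd]; rfl

/-- the control measure -/
def ctrl (u : Lp E 1 μ) : Measure Ω := μ.withDensity fun x => (‖(u : Ω → E) x‖₊ : ℝ≥0∞)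

lemma ctrl_finite (u : Lp E 1 μ) : IsFiniteMeasure (ctrl u) := by
  constructor
  rw [ctrl, withDensity_apply _ MeasurableSet.univ, Measure.restrict_univ]
  have := Lp.eLpNorm_lt_top u
  rw [eLpNorm_one_eq_lintegral_enorm] at this; exact this

lemma norm_indLp (u : Lp E 1 μ) (B : Set Ω) (hB : MeasurableSet B) :
    ‖indLp u B hB‖ = (ctrl u B).toReal := by
  rw [indLp, Lp.norm_toLp]
  congr 1
  rw [eLpNorm_one_eq_lintegral_enorm, ctrl, withDensity_apply _ hB, ← lintegral_indicator hB]
  congr 1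
  ext x
  rw [enorm_indicator_eq_indicator_enorm]
  by_cases hx : x ∈ B <;> simp [hx] <;> rfl

lemma indLp_biUnion (u : Lp E 1 μ) (B : ℕ → Set Ω) (hB : ∀ n, MeasurableSet (B n))
    (hd : Pairwise (Function.onFun Disjoint B)) (s : Finset ℕ) :
    indLp u (⋃ n ∈ s, B n) (s.measurableSet_biUnion fun n _ => hB n) =
      ∑ n ∈ s, indLp u (B n) (hB n) := by
  classical
  induction s using Finset.induction_on with
  | empty => simpa using indLp_empty u
  | @insert a s ha ih =>
    have hmeas : MeasurableSet (⋃ n ∈ s, B n) := s.measurableSet_biUnion fun n _ => hB n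
    have hdisj : Disjoint (B a) (⋃ n ∈ s, B n) := by
      refine Set.disjoint_iUnion₂_right.mpr fun n hn => hd (fun h => ha (h ▸ hn))
    have hset : (⋃ n ∈ insert a s, B n) = B a ∪ ⋃ n ∈ s, B n := by
      simp [Set.biUnion_insert]
    have : indLp u (⋃ n ∈ insert a s, B n) ((insert a s).measurableSet_biUnion fun n _ => hB n)
        = indLp u (B a ∪ ⋃ n ∈ s, B n) ((hB a).union hmeas) := by
      congr 1
    rw [this, indLp_union u (hB a) hmeas hdisj, ih, Finset.sum_insert ha]

lemma indLp_diff (u : Lp E 1 μ) {V U : Set Ω} (hV : MeasurableSet V) (hU : MeasurableSet U)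
    (hVU : V ⊆ U) :
    indLp u U hU - indLp u V hV = indLp u (U \ V) (hU.diff hV) := by
  have h : indLp u U hU = indLp u V hV + indLp u (U \ V) (hU.diff hV) := by
    have hset : U = V ∪ (U \ V) := by rw [Set.union_diff_cancel hVU]
    have : indLp u U hU = indLp u (V ∪ (U \ V)) (hV.union (hU.diff hV)) := by congr 1
    rw [this, indLp_union u hV (hU.diff hV) Set.disjoint_sdiff_right]
  rw [h]; abel

lemma hasSum_indLp (u : Lp E 1 μ) (B : ℕ → Set Ω) (hB : ∀ n, MeasurableSet (B n))
    (hd : Pairwise (Function.onFun Disjoint B)) :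
    HasSum (fun n => indLp u (B n) (hB n)) (indLp u (⋃ n, B n) (MeasurableSet.iUnion hB)) := by
  have hfin : IsFiniteMeasure (ctrl u) := ctrl_finite u
  set ν := ctrl u with hν
  have hνU : ν (⋃ n, B n) ≠ ∞ := measure_ne_top ν _
  rw [HasSum, tendsto_iff_norm_sub_tendsto_zero]
  have key : ∀ s : Finset ℕ,
      ‖(∑ n ∈ s, indLp u (B n) (hB n)) - indLp u (⋃ n, B n) (MeasurableSet.iUnion hB)‖
        = (ν ((⋃ n, B n) \ ⋃ n ∈ s, B n)).toReal := by
    intro s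
    rw [← indLp_biUnion u B hB hd s, norm_sub_rev,
      indLp_diff u (s.measurableSet_biUnion fun n _ => hB n) (MeasurableSet.iUnion hB)
        (Set.iUnion₂_subset fun n _ => Set.subset_iUnion B n),
      norm_indLp]
  simp_rw [key]
  -- now show the measure of the tail tends to 0
  have hdiff : ∀ s : Finset ℕ, (ν ((⋃ n, B n) \ ⋃ n ∈ s, B n)).toReal
      = (ν (⋃ n, B n)).toReal - (ν (⋃ n ∈ s, B n)).toReal := by
    intro s
    rw [measure_diff (Set.iUnion₂_subset fun n _ => Set.subset_iUnion B n)
      ((s.measurableSet_biUnion fun n _ => hB n)).nullMeasurableSet (measure_ne_top ν _),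
      ENNReal.toReal_sub_of_le (measure_mono (Set.iUnion₂_subset fun n _ => Set.subset_iUnion B n)) hνU]
  simp_rw [hdiff]
  have hsum : HasSum (fun n => (ν (B n)).toReal) ((ν (⋃ n, B n)).toReal) := by
    have h1 : ν (⋃ n, B n) = ∑' n, ν (B n) := measure_iUnion hd hB
    have h2 : ∑' n, ν (B n) ≠ ∞ := by rw [← h1]; exact hνU
    have h3 := ENNReal.hasSum_toReal h2
    rwa [← ENNReal.tsum_toReal_eq (fun n => measure_ne_top ν _), ← h1] at h3
  have htend : Filter.Tendsto (fun s : Finset ℕ => (ν (⋃ n ∈ s, B n)).toReal)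
      Filter.atTop (nhds ((ν (⋃ n, B n)).toReal)) := by
    have heq : ∀ s : Finset ℕ, ∑ n ∈ s, (ν (B n)).toReal = (ν (⋃ n ∈ s, B n)).toReal := by
      intro s
      rw [measure_biUnion_finset (hd.set_pairwise _) (fun n _ => hB n),
        ENNReal.toReal_sum (fun n _ => measure_ne_top ν _)]
    have := hsum
    rw [HasSum] at this
    refine this.congr (fun s => heq s)
  have hfinal := (tendsto_const_nhds (x := (ν (⋃ n, B n)).toReal)
    (f := Filter.atTop (α := Finset ℕ))).sub htend
  rw [sub_self] at hfinal
  exact hfinal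

variable [IsFiniteMeasure μ]

/-- The signed measure `B ↦ φ (χ_B • u)`. -/
def indSM (φ : Lp E 1 μ →L[ℝ] ℝ) (u : Lp E 1 μ) : SignedMeasure Ω where
  measureOf' := fun B => if h : MeasurableSet B then φ (indLp u B h) else 0
  empty' := by
    simp only [dif_pos MeasurableSet.empty, indLp_empty, map_zero]
  not_measurable' := fun s hs => dif_neg hs
  m_iUnion' := by
    intro B hB hd
    simp only [dif_pos (hB _), dif_pos (MeasurableSet.iUnion hB)]
    exact (hasSum_indLp u B hB hd).mapL φ

lemma indSM_apply (φ : Lp E 1 μ →L[ℝ] ℝ) (u : Lp E 1 μ) {B : Set Ω} (hB : MeasurableSet B) :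
    indSM φ u B = φ (indLp u B hB) := dif_pos hB

lemma indSM_ac (φ : Lp E 1 μ →L[ℝ] ℝ) (u : Lp E 1 μ) :
    indSM φ u ≪ᵥ μ.toENNRealVectorMeasure := by
  refine VectorMeasure.AbsolutelyContinuous.mk (fun B hB h0 => ?_)
  rw [Measure.toENNRealVectorMeasure_apply_measurable hB] at h0
  have hz : indLp u B hB = 0 := by
    rw [indLp, MemLp.toLp_congr (memLp_ind u _ hB) (MemLp.zero)
      (by
        refine Filter.EventuallyEq.trans (indicator_meas_zero h0) ?_
        rfl)]
    exact MemLp.toLp_zero _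
  rw [indSM_apply φ u hB, hz, map_zero]

/-- Radon–Nikodym density for `B ↦ φ (χ_B • u)`. -/
lemma exists_density (φ : Lp E 1 μ →L[ℝ] ℝ) (u : Lp E 1 μ) :
    ∃ v : Ω → ℝ, Integrable v μ ∧
      ∀ B : Set Ω, ∀ hB : MeasurableSet B, ∫ x in B, v x ∂μ = φ (indLp u B hB) := by
  refine ⟨(indSM φ u).rnDeriv μ, SignedMeasure.integrable_rnDeriv _ _, fun B hB => ?_⟩
  have key := SignedMeasure.withDensityᵥ_rnDeriv_eq (indSM φ u) μ (indSM_ac φ u)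
  have h1 : (μ.withDensityᵥ ((indSM φ u).rnDeriv μ)) B = indSM φ u B := by rw [key]
  rw [withDensityᵥ_apply (SignedMeasure.integrable_rnDeriv _ _) hB] at h1
  rw [h1, indSM_apply φ u hB]

lemma exists_good_set {ι : Type*} [Fintype ι] [IsFiniteMeasure μ] (hna : Nonatomic μ)
    (v : ι → Ω → ℝ) (hv : ∀ i, Integrable (v i) μ) {t : ℝ} (ht0 : 0 ≤ t) (ht1 : t ≤ 1)
    {ε : ℝ} (hε : 0 < ε) :
    ∃ A : Set Ω, MeasurableSet A ∧
      ∀ i, |(∫ x in A, v i x ∂μ) - t * ∫ x, v i x ∂μ| < ε := by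
  have hδ : (ENNReal.ofReal (ε / 3)) ≠ 0 := (ENNReal.ofReal_pos.mpr (by linarith)).ne'
  choose s hs hsmem using fun i =>
    (memLp_one_iff_integrable.mpr (hv i)).exists_simpleFunc_eLpNorm_sub_lt
      (by norm_num : (1 : ℝ≥0∞) ≠ ∞) hδ
  have hsint : ∀ i, Integrable (s i) μ := fun i => memLp_one_iff_integrable.mp (hsmem i)
  have hdint : ∀ i, Integrable (fun x => v i x - s i x) μ := fun i => (hv i).sub (hsint i)
  -- error bound
  have herr : ∀ i, ∫ x, |v i x - s i x| ∂μ ≤ ε / 3 := by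
    intro i
    have h1 : ∫ x, |v i x - s i x| ∂μ = (eLpNorm (fun x => v i x - s i x) 1 μ).toReal := by
      rw [eLpNorm_one_eq_lintegral_enorm]
      have := integral_norm_eq_lintegral_enorm (f := fun x => v i x - s i x)
        (hdint i).aestronglyMeasurable
      simpa [Real.norm_eq_abs] using this
    rw [h1]
    have h2 : eLpNorm (fun x => v i x - s i x) 1 μ ≤ ENNReal.ofReal (ε / 3) := by
      have := hs i
      refine le_of_lt ?_
      convert this using 2
      rfl
    calc (eLpNorm (fun x => v i x - s i x) 1 μ).toReal
        ≤ (ENNReal.ofReal (ε / 3)).toReal := ENNReal.toReal_mono ENNReal.ofReal_ne_top h2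
      _ = ε / 3 := ENNReal.toReal_ofReal (by linarith)
  -- the simple vector function and its fibers
  set T : Ω → ι → ℝ := fun x i => s i x with hT
  have hTmeas : Measurable T := measurable_pi_lambda _ fun i => (s i).measurable
  have hTrange : (Set.range T).Finite := by
    refine Set.Finite.subset (Set.Finite.pi (fun i => (s i).finite_range)) ?_
    rintro y ⟨x, rfl⟩
    exact fun i _ => ⟨x, rfl⟩
  set F := hTrange.toFinset with hF
  have hFibmeas : ∀ y : ι → ℝ, MeasurableSet (T ⁻¹' {y}) := fun y =>
    hTmeas (measurableSet_singleton y)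
  choose Q hQsub hQmeas hQvol using fun y : ι → ℝ =>
    hna.exists_measure_eq (hFibmeas y) (measure_ne_top μ _)
      (c := ENNReal.ofReal t * μ (T ⁻¹' {y}))
      (by
        calc ENNReal.ofReal t * μ (T ⁻¹' {y}) ≤ 1 * μ (T ⁻¹' {y}) := by
              gcongr
              exact ENNReal.ofReal_le_one.mpr ht1
          _ = μ (T ⁻¹' {y}) := one_mul _)
  set A : Set Ω := ⋃ y ∈ F, Q y with hA
  have hAmeas : MeasurableSet A := F.measurableSet_biUnion fun y _ => hQmeas y
  refine ⟨A, hAmeas, fun i => ?_⟩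
  -- fibers are pairwise disjoint and cover
  have hfibdisj : ∀ y z : ι → ℝ, y ≠ z → Disjoint (T ⁻¹' {y}) (T ⁻¹' {z}) := by
    intro y z hyz
    refine Set.disjoint_left.mpr fun x hx hx' => ?_
    exact hyz ((Set.mem_preimage.mp hx).symm.trans (Set.mem_preimage.mp hx'))
  have hQdisj : (F : Set (ι → ℝ)).Pairwise (Function.onFun Disjoint Q) := by
    intro y _ z _ hyz
    exact Set.disjoint_of_subset (hQsub y) (hQsub z) (hfibdisj y z hyz)
  have huniv : (⋃ y ∈ F, T ⁻¹' {y}) = Set.univ := by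
    ext x
    simp only [Set.mem_iUnion, Set.mem_univ, iff_true]
    exact ⟨T x, by simp [hF, Set.mem_range_self], rfl⟩
  -- fiber values
  have hQval : ∀ y ∈ F, ∫ x in Q y, s i x ∂μ = t * ((μ (T ⁻¹' {y})).toReal * y i) := by
    intro y _
    have hcongr : ∫ x in Q y, s i x ∂μ = ∫ _x in Q y, y i ∂μ := by
      refine setIntegral_congr_fun (hQmeas y) fun x hx => ?_
      have : T x = y := hQsub y hx
      simpa [hT] using congrFun this i
    rw [hcongr, setIntegral_const, Measure.real, hQvol, ENNReal.toReal_mul,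
      ENNReal.toReal_ofReal ht0, smul_eq_mul]
    ring
  have hFval : ∀ y ∈ F, ∫ x in T ⁻¹' {y}, s i x ∂μ = (μ (T ⁻¹' {y})).toReal * y i := by
    intro y _
    have hcongr : ∫ x in T ⁻¹' {y}, s i x ∂μ = ∫ _x in T ⁻¹' {y}, y i ∂μ := by
      refine setIntegral_congr_fun (hFibmeas y) fun x hx => ?_
      have hxy : T x = y := hx
      simpa [hT] using congrFun hxy i
    rw [hcongr, setIntegral_const, Measure.real, smul_eq_mul]
  -- the key exact identity for simple functions
  have hkey : ∫ x in A, s i x ∂μ = t * ∫ x, s i x ∂μ := by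
    have h1 : ∫ x in A, s i x ∂μ = ∑ y ∈ F, ∫ x in Q y, s i x ∂μ :=
      integral_biUnion_finset F (fun y _ => hQmeas y) hQdisj
        (fun y _ => (hsint i).integrableOn)
    have h2 : ∫ x, s i x ∂μ = ∑ y ∈ F, ∫ x in T ⁻¹' {y}, s i x ∂μ := by
      rw [← setIntegral_univ (μ := μ) (f := fun x => s i x), ← huniv]
      exact integral_biUnion_finset F (fun y _ => hFibmeas y)
        (fun y _ z _ hyz => hfibdisj y z hyz) (fun y _ => (hsint i).integrableOn)
    rw [h1, h2, Finset.mul_sum]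
    refine Finset.sum_congr rfl fun y hy => ?_
    rw [hQval y hy, hFval y hy]
  -- assemble
  set d : Ω → ℝ := fun x => v i x - s i x with hd
  have hAv : ∫ x in A, v i x ∂μ = ∫ x in A, s i x ∂μ + ∫ x in A, d x ∂μ := by
    rw [← integral_add ((hsint i).integrableOn) ((hdint i).integrableOn)]
    refine setIntegral_congr_fun hAmeas fun x _ => by simp [hd]
  have hv' : ∫ x, v i x ∂μ = ∫ x, s i x ∂μ + ∫ x, d x ∂μ := by
    rw [← integral_add (hsint i) (hdint i)]
    refine integral_congr_ae (Filter.Eventually.of_forall fun x => by simp [hd])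
  have habs1 : |∫ x in A, d x ∂μ| ≤ ε / 3 := by
    calc |∫ x in A, d x ∂μ| ≤ ∫ x in A, |d x| ∂μ := by
          simpa [Real.norm_eq_abs] using
            norm_integral_le_integral_norm (μ := μ.restrict A) d
      _ ≤ ∫ x, |d x| ∂μ :=
          setIntegral_le_integral (hdint i).abs
            (Filter.Eventually.of_forall fun x => abs_nonneg _)
      _ ≤ ε / 3 := herr i
  have habs2 : |∫ x, d x ∂μ| ≤ ε / 3 := by
    calc |∫ x, d x ∂μ| ≤ ∫ x, |d x| ∂μ := by
          simpa [Real.norm_eq_abs] using norm_integral_le_integral_norm (μ := μ) d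
      _ ≤ ε / 3 := herr i
  have hcalc : (∫ x in A, v i x ∂μ) - t * ∫ x, v i x ∂μ
      = (∫ x in A, d x ∂μ) - t * ∫ x, d x ∂μ := by
    rw [hAv, hv', hkey]; ring
  rw [hcalc]
  calc |(∫ x in A, d x ∂μ) - t * ∫ x, d x ∂μ|
      ≤ |∫ x in A, d x ∂μ| + |t * ∫ x, d x ∂μ| := abs_sub _ _
    _ ≤ ε / 3 + |t| * |∫ x, d x ∂μ| := by rw [abs_mul]; gcongr
    _ ≤ ε / 3 + 1 * (ε / 3) := by
        have h1 : |t| ≤ 1 := by rw [abs_of_nonneg ht0]; exact ht1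
        have h2 : (0:ℝ) ≤ |∫ x, d x ∂μ| := abs_nonneg _
        have := mul_le_mul h1 habs2 h2 zero_le_one
        linarith
    _ < ε := by linarith

end Aux

/-- Over a nonatomic finite measure space, a weakly closed decomposable subset of
`L¹(μ,E)` is convex. -/
theorem convex_of_decomposable_weaklyClosed
    {Ω : Type*} [MeasurableSpace Ω] (μ : Measure Ω) [IsFiniteMeasure μ] [μ.IsComplete]
    {E : Type*} [NormedAddCommGroup E] [NormedSpace ℝ E] [CompleteSpace E]
    [TopologicalSpace.SeparableSpace E]
    (hna : Nonatomic μ)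
    (K : Set (Lp E 1 μ))
    (hdec : Decomposable μ K)
    (hwcl : IsClosed ((toWeakSpace ℝ (Lp E 1 μ)) '' K)) :
    Convex ℝ K := by
  intro f hf g hg a b ha hb hab
  have hb' : b = 1 - a := by linarith
  have ha1 : a ≤ 1 := by linarith
  set z : Lp E 1 μ := a • f + b • g with hz
  set u : Lp E 1 μ := f - g with hu
  have hzeq : z = g + a • u := by
    rw [hz, hu, hb', sub_smul, one_smul, smul_sub]; abel
  suffices hmem : toWeakSpace ℝ (Lp E 1 μ) z ∈ (toWeakSpace ℝ (Lp E 1 μ)) '' K by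
    obtain ⟨k, hk, hkz⟩ := hmem
    have hkz' : k = z := (toWeakSpace ℝ (Lp E 1 μ)).injective hkz
    exact hkz' ▸ hk
  have hcl : toWeakSpace ℝ (Lp E 1 μ) z ∈ closure ((toWeakSpace ℝ (Lp E 1 μ)) '' K) := by
    set B := (topDualPairing ℝ (Lp E 1 μ)).flip with hB
    have hbasis := (LinearMap.weakBilin_withSeminorms B).hasBasis_ball
      (x := toWeakSpace ℝ (Lp E 1 μ) z)
    refine (mem_closure_iff_nhds_basis hbasis).2 ?_
    rintro ⟨Φ, r⟩ hr
    simp only at hr ⊢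
    -- densities
    choose v hvint hvrep using fun φ : ↥Φ => exists_density (φ : Lp E 1 μ →L[ℝ] ℝ) u
    obtain ⟨A, hAmeas, hbound⟩ := exists_good_set hna v hvint ha ha1 hr
    have hAK : g + indLp u A hAmeas ∈ K := by
      refine hdec f hf g hg A hAmeas _ ?_
      filter_upwards [Lp.coeFn_add g (indLp u A hAmeas), indLp_coeFn u A hAmeas,
        Lp.coeFn_sub f g] with x h1 h2 h3
      rw [h1, Pi.add_apply, h2]
      by_cases hx : x ∈ A
      · rw [Set.indicator_of_mem hx, Set.piecewise_eq_of_mem _ _ _ hx, hu, h3,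
          Pi.sub_apply]
        abel
      · rw [Set.indicator_of_notMem hx, Set.piecewise_eq_of_notMem _ _ _ hx, add_zero]
    refine ⟨toWeakSpace ℝ (Lp E 1 μ) (g + indLp u A hAmeas), Set.mem_image_of_mem _ hAK, ?_⟩
    refine (Seminorm.mem_ball _).2 ?_
    refine Seminorm.finset_sup_apply_lt hr fun φ hφ => ?_
    have harr : (g + indLp u A hAmeas) - z = indLp u A hAmeas - a • u := by rw [hzeq]; abel
    have hval : φ ((g + indLp u A hAmeas) - z)
        = (∫ x in A, v ⟨φ, hφ⟩ x ∂μ) - a * ∫ x, v ⟨φ, hφ⟩ x ∂μ := by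
      rw [harr, map_sub, _root_.map_smul]
      rw [← hvrep ⟨φ, hφ⟩ A hAmeas]
      have huniv : φ u = ∫ x, v ⟨φ, hφ⟩ x ∂μ := by
        rw [← setIntegral_univ, hvrep ⟨φ, hφ⟩ Set.univ MeasurableSet.univ, indLp_univ]
      rw [huniv, smul_eq_mul]
    refine lt_of_eq_of_lt ?_ (hbound ⟨φ, hφ⟩)
    rw [← hval]
    rfl
  rwa [hwcl.closure_eq] at hcl
end
end

section
/- Let (Ω,Σ,μ) be a complete finite measure space and E a separable Banach space. A nonempty subset K of L¹(μ,E) that is closed in the L¹ norm is decomposable if and only if there exists a set-valued map Φ from Ω to nonempty closed subsets of E with product-measurable graph such that K = S¹_Φ, the set of all Bochner integrable functions f with f(ω) ∈ Φ(ω) for a.e. ω. -/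
open MeasureTheory TopologicalSpace
open scoped Classical

noncomputable section

/-- `S¹_Γ`: the set of Bochner integrable a.e.-selectors of the multifunction `Γ`. -/
def selectorsL1 {Ω E : Type*} [MeasurableSpace Ω] [NormedAddCommGroup E]
    (μ : Measure Ω) (Γ : Ω → Set E) : Set (Lp E 1 μ) :=
  {f : Lp E 1 μ | ∀ᵐ ω ∂μ, (f : Ω → E) ω ∈ Γ ω}

namespace HiaiUmegakiAux
open Filter
open scoped ENNReal


/-- Essential union: countable subfamily covering every member up to null sets. -/
lemma exists_essential_union {Ω : Type*} [MeasurableSpace Ω] (μ : Measure Ω) [IsFiniteMeasure μ]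
    {ι : Type*} [Nonempty ι] (S : ι → Set Ω) (hS : ∀ i, MeasurableSet (S i)) :
    ∃ g : ℕ → ι, ∀ t, μ (S t \ ⋃ n, S (g n)) = 0 := by
  set A : Set ℝ≥0∞ := Set.range (fun T : ℕ → ι => μ (⋃ n, S (T n))) with hA
  have hAne : A.Nonempty := ⟨_, ⟨fun _ => Classical.arbitrary ι, rfl⟩⟩
  have hbdd : BddAbove A := OrderTop.bddAbove A
  obtain ⟨u, hu_mono, hu_tend, hu_mem⟩ := exists_seq_tendsto_sSup hAne hbdd
  choose T hT using fun n => hu_mem n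
  let e : ℕ → ℕ × ℕ := fun n => (Denumerable.eqv (ℕ × ℕ)).symm n
  refine ⟨fun n => T (e n).1 (e n).2, fun t => ?_⟩
  set U : Set Ω := ⋃ n, S (T (e n).1 (e n).2) with hU
  have hUm : MeasurableSet U := MeasurableSet.iUnion (fun n => hS _)
  have hsub : ∀ n, (⋃ k, S (T n k)) ⊆ U := by
    intro n
    refine Set.iUnion_subset fun k => ?_
    have : S (T n k) = S (T (e ((Denumerable.eqv (ℕ × ℕ)).symm.symm (n, k)) ).1
        (e ((Denumerable.eqv (ℕ × ℕ)).symm.symm (n, k))).2) := by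
      simp [e]
    rw [this]
    exact Set.subset_iUnion (fun m => S (T (e m).1 (e m).2)) _
  have hUc : μ U = sSup A := by
    refine le_antisymm (le_sSup ⟨_, rfl⟩) ?_
    have : ∀ n, u n ≤ μ U := fun n => (hT n) ▸ measure_mono (hsub n)
    exact le_of_tendsto hu_tend (Filter.Eventually.of_forall this)
  -- now union with S t
  have hV : μ (S t ∪ U) ≤ sSup A := by
    have : S t ∪ U = ⋃ n, S (Nat.rec t (fun m _ => T (e m).1 (e m).2) n : ι) := by
      ext ω
      simp only [Set.mem_union, Set.mem_iUnion]
      constructor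
      · rintro (h | h)
        · exact ⟨0, h⟩
        · obtain ⟨n, hn⟩ := Set.mem_iUnion.1 h
          exact ⟨n + 1, hn⟩
      · rintro ⟨n, hn⟩
        cases n with
        | zero => exact Or.inl hn
        | succ m => exact Or.inr (Set.mem_iUnion.2 ⟨m, hn⟩)
    rw [this]
    exact le_sSup ⟨_, rfl⟩
  have h1 : μ (S t \ U) = μ (S t ∪ U) - μ U := by
    have : S t \ U = (S t ∪ U) \ U := by
      ext ω; simp only [Set.mem_diff, Set.mem_union]; tauto
    rw [this, measure_diff Set.subset_union_right hUm.nullMeasurableSet (measure_ne_top μ U)]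
  rw [h1, hUc]
  exact tsub_eq_zero_of_le hV


variable {Ω : Type*} [MeasurableSpace Ω] {μ : Measure Ω}
variable {E : Type*} [NormedAddCommGroup E]

noncomputable def pcwLp {A : Set Ω} (hA : MeasurableSet A) (f g : Lp E 1 μ) : Lp E 1 μ :=
  (((Lp.memLp f).indicator hA).add ((Lp.memLp g).indicator hA.compl)).toLp _

lemma pcwLp_coeFn {A : Set Ω} (hA : MeasurableSet A) (f g : Lp E 1 μ) :
    (pcwLp hA f g : Ω → E) =ᵐ[μ] A.piecewise (f : Ω → E) (g : Ω → E) := by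
  refine (MemLp.coeFn_toLp _).trans ?_
  refine Filter.Eventually.of_forall fun ω => ?_
  by_cases hω : ω ∈ A <;>
    simp [Set.piecewise, Set.indicator, hω, Pi.add_apply]

lemma key_approx [IsFiniteMeasure μ]
    {K : Set (Lp E 1 μ)} (hK : Decomposable μ K) {f₀ : Lp E 1 μ} (hf₀ : f₀ ∈ K)
    (h : Lp E 1 μ) (C : ℕ → Set Ω) (hC : ∀ m, MeasurableSet (C m))
    (hcov : ∀ᵐ ω ∂μ, ∃ m, ω ∈ C m)
    (g : ℕ → Lp E 1 μ) (hg : ∀ m, g m ∈ K) (δ : ℝ≥0∞)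
    (hclose : ∀ m, ∀ᵐ ω ∂μ, ω ∈ C m →
      (‖(h : Ω → E) ω - (g m : Ω → E) ω‖₊ : ℝ≥0∞) ≤ δ)
    {ε : ℝ≥0∞} (hε : 0 < ε) :
    ∃ p ∈ K, ∫⁻ ω, ‖(p : Ω → E) ω - (h : Ω → E) ω‖₊ ∂μ ≤ δ * μ Set.univ + ε := by
  set C' : ℕ → Set Ω := disjointed C with hC'def
  have hC' : ∀ m, MeasurableSet (C' m) := MeasurableSet.disjointed hC
  set D : ℕ → Set Ω := fun M => ⋃ (m : ℕ) (_ : m < M), C' m with hDdef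
  have hD : ∀ M, MeasurableSet (D M) := fun M =>
    MeasurableSet.iUnion fun m => MeasurableSet.iUnion fun _ => hC' m
  set hs : ℕ → Lp E 1 μ :=
    fun M => Nat.rec f₀ (fun M p => pcwLp (hC' M) (g M) p) M with hhs
  have hstep : ∀ M, hs (M + 1) = pcwLp (hC' M) (g M) (hs M) := fun M => rfl
  have main : ∀ M, hs M ∈ K ∧ (∀ᵐ ω ∂μ,
      (∀ m, m < M → ω ∈ C' m → (hs M : Ω → E) ω = (g m : Ω → E) ω) ∧
      (ω ∉ D M → (hs M : Ω → E) ω = (f₀ : Ω → E) ω)) := by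
    intro M
    induction M with
    | zero =>
      refine ⟨hf₀, Filter.Eventually.of_forall fun ω => ⟨fun m hm => absurd hm (Nat.not_lt_zero m),
        fun _ => rfl⟩⟩
    | succ M IH =>
      have hpc := pcwLp_coeFn (hC' M) (g M) (hs M)
      have hmem : hs (M + 1) ∈ K := by
        rw [hstep]
        exact hK (g M) (hg M) (hs M) IH.1 (C' M) (hC' M) _ (pcwLp_coeFn (hC' M) (g M) (hs M))
      refine ⟨hmem, ?_⟩
      have hpc' : (hs (M + 1) : Ω → E) =ᵐ[μ]
          (C' M).piecewise (g M : Ω → E) (hs M : Ω → E) := by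
        rw [hstep]; exact hpc
      filter_upwards [IH.2, hpc'] with ω hIH hpcω
      constructor
      · intro m hm hmC
        rcases Nat.lt_succ_iff_lt_or_eq.1 hm with hm' | rfl
        · have hne : ω ∉ C' M := by
            intro hmem'
            exact Set.disjoint_left.1 (disjoint_disjointed C (Nat.ne_of_lt hm')) hmC hmem'
          rw [hpcω, Set.piecewise_eq_of_notMem _ _ _ hne]
          exact hIH.1 m hm' hmC
        · rw [hpcω, Set.piecewise_eq_of_mem _ _ _ hmC]
      · intro hnot
        have h1 : ω ∉ C' M := fun hmem' => hnot <| Set.mem_iUnion.2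
          ⟨M, Set.mem_iUnion.2 ⟨Nat.lt_succ_self M, hmem'⟩⟩
        have h2 : ω ∉ D M := fun hmem' => by
          obtain ⟨m, hm⟩ := Set.mem_iUnion.1 hmem'
          obtain ⟨hm', hmC⟩ := Set.mem_iUnion.1 hm
          exact hnot <| Set.mem_iUnion.2 ⟨m, Set.mem_iUnion.2 ⟨Nat.lt_succ_of_lt hm', hmC⟩⟩
        rw [hpcω, Set.piecewise_eq_of_notMem _ _ _ h1]
        exact hIH.2 h2
  -- the tail integrals
  have hint : Integrable (fun ω => (f₀ : Ω → E) ω - (h : Ω → E) ω) μ :=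
    (L1.integrable_coeFn f₀).sub (L1.integrable_coeFn h)
  set b : Ω → ℝ≥0∞ := fun ω => (‖(f₀ : Ω → E) ω - (h : Ω → E) ω‖₊ : ℝ≥0∞) with hbdef
  have hbmeas : Measurable b :=
    ((Lp.stronglyMeasurable f₀).sub (Lp.stronglyMeasurable h)).enorm
  set t : ℕ → ℝ≥0∞ := fun M => ∫⁻ ω in (D M)ᶜ, b ω ∂μ with htdef
  have htend : Tendsto t atTop (nhds 0) := by
    have heq : t = fun M => ∫⁻ ω, ((D M)ᶜ).indicator b ω ∂μ :=
      funext fun M => (lintegral_indicator (hD M).compl b).symm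
    rw [heq]
    have h0 : Tendsto (fun M => ∫⁻ ω, ((D M)ᶜ).indicator b ω ∂μ) atTop
        (nhds (∫⁻ _, (0 : ℝ≥0∞) ∂μ)) := ?_
    · simpa using h0
    refine tendsto_lintegral_of_dominated_convergence b
      (fun M => hbmeas.indicator (hD M).compl) (fun M =>
        Filter.Eventually.of_forall fun ω => Set.indicator_le_self _ _ _) hint.2.ne ?_
    filter_upwards [hcov] with ω hω
    obtain ⟨m, hm⟩ := hω
    have : ω ∈ ⋃ n, C' n := by
      rw [hC'def, iUnion_disjointed]
      exact Set.mem_iUnion.2 ⟨m, hm⟩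
    obtain ⟨m₀, hm₀⟩ := Set.mem_iUnion.1 this
    have : ∀ M, m₀ + 1 ≤ M → ((D M)ᶜ).indicator b ω = 0 := by
      intro M hM
      have : ω ∈ D M := Set.mem_iUnion.2 ⟨m₀, Set.mem_iUnion.2 ⟨hM, hm₀⟩⟩
      exact Set.indicator_of_notMem (by simpa using this) b
    exact tendsto_atTop_of_eventually_const this
  obtain ⟨M, hM⟩ := (htend.eventually (Iio_mem_nhds hε)).exists
  refine ⟨hs M, (main M).1, ?_⟩
  have hmeas2 : Measurable fun ω => (‖(hs M : Ω → E) ω - (h : Ω → E) ω‖₊ : ℝ≥0∞) :=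
    ((Lp.stronglyMeasurable (hs M)).sub (Lp.stronglyMeasurable h)).enorm
  rw [← lintegral_add_compl (fun ω => (‖(hs M : Ω → E) ω - (h : Ω → E) ω‖₊ : ℝ≥0∞)) (hD M)]
  have hb1 : ∫⁻ ω in D M, (‖(hs M : Ω → E) ω - (h : Ω → E) ω‖₊ : ℝ≥0∞) ∂μ ≤ δ * μ Set.univ := by
    have hcl' : ∀ᵐ ω ∂μ, ∀ m, ω ∈ C m →
        (‖(h : Ω → E) ω - (g m : Ω → E) ω‖₊ : ℝ≥0∞) ≤ δ := ae_all_iff.2 hclose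
    have hae : ∀ᵐ ω ∂μ, ω ∈ D M →
        (‖(hs M : Ω → E) ω - (h : Ω → E) ω‖₊ : ℝ≥0∞) ≤ δ := by
      filter_upwards [(main M).2, hcl'] with ω hω hcl hD
      obtain ⟨m, hm⟩ := Set.mem_iUnion.1 hD
      obtain ⟨hm', hmC⟩ := Set.mem_iUnion.1 hm
      rw [hω.1 m hm' hmC]
      rw [show ‖(g m : Ω → E) ω - (h : Ω → E) ω‖₊ = ‖(h : Ω → E) ω - (g m : Ω → E) ω‖₊ by
        rw [← nnnorm_neg]; congr 1; abel]
      exact hcl m (disjointed_subset C m hmC)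
    calc ∫⁻ ω in D M, (‖(hs M : Ω → E) ω - (h : Ω → E) ω‖₊ : ℝ≥0∞) ∂μ
        ≤ ∫⁻ _ in D M, δ ∂μ := setLIntegral_mono_ae' (hD M) hae
      _ = δ * μ (D M) := setLIntegral_const _ _
      _ ≤ δ * μ Set.univ := mul_le_mul_right (measure_mono (Set.subset_univ _)) δ
  have hb2 : ∫⁻ ω in (D M)ᶜ, (‖(hs M : Ω → E) ω - (h : Ω → E) ω‖₊ : ℝ≥0∞) ∂μ ≤ ε := by
    have hae : ∀ᵐ ω ∂μ.restrict (D M)ᶜ,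
        (‖(hs M : Ω → E) ω - (h : Ω → E) ω‖₊ : ℝ≥0∞) = b ω := by
      filter_upwards [ae_restrict_of_ae (main M).2, ae_restrict_mem (hD M).compl] with ω hω hmem
      rw [hω.2 hmem]
    rw [lintegral_congr_ae hae]
    exact le_of_lt hM
  exact add_le_add hb1 hb2

end HiaiUmegakiAux

open HiaiUmegakiAux Filter
open scoped ENNReal

/-- **Hiai–Umegaki representation.** A nonempty norm-closed subset `K` of `L¹(μ,E)`
is decomposable if and only if `K = S¹_Φ` for some multifunction `Φ` with nonempty
closed values and product-measurable graph. -/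
theorem decomposable_iff_selectors_of_closed
    {Ω : Type*} [MeasurableSpace Ω] (μ : Measure Ω) [IsFiniteMeasure μ] [μ.IsComplete]
    {E : Type*} [NormedAddCommGroup E] [NormedSpace ℝ E] [CompleteSpace E]
    [TopologicalSpace.SeparableSpace E] [MeasurableSpace E] [BorelSpace E]
    (K : Set (Lp E 1 μ)) (hKne : K.Nonempty) (hcl : IsClosed K) :
    Decomposable μ K ↔
      ∃ Φ : Ω → Set E, (∀ ω, (Φ ω).Nonempty) ∧ (∀ ω, IsClosed (Φ ω)) ∧
        MeasurableSet {p : Ω × E | p.2 ∈ Φ p.1} ∧ K = selectorsL1 μ Φ := by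
  constructor
  · -- hard direction
    intro hK
    obtain ⟨f₀, hf₀⟩ := hKne
    haveI : Nonempty ↥K := ⟨⟨f₀, hf₀⟩⟩
    set q : ℕ → E := denseSeq E with hq
    have hqd : DenseRange q := denseRange_denseSeq E
    set B : ℕ × ℕ → Set E := fun i => Metric.ball (q i.1) (1 / (i.2 + 1)) with hBdef
    have hBo : ∀ i, IsOpen (B i) := fun i => Metric.isOpen_ball
    have hchoice : ∀ i : ℕ × ℕ, ∃ g : ℕ → ↥K, ∀ t : ↥K,
        μ ((((t : Lp E 1 μ) : Ω → E) ⁻¹' B i) \ ⋃ n, (((g n : Lp E 1 μ) : Ω → E) ⁻¹' B i)) = 0 :=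
      fun i => HiaiUmegakiAux.exists_essential_union μ
        (fun f : ↥K => ((f : Lp E 1 μ) : Ω → E) ⁻¹' B i)
        (fun f => (Lp.stronglyMeasurable (f : Lp E 1 μ)).measurable (hBo i).measurableSet)
    choose G hG using hchoice
    set A : ℕ × ℕ → Set Ω := fun i => ⋃ n, (((G i n : Lp E 1 μ) : Ω → E) ⁻¹' B i) with hAdef
    have hAmeas : ∀ i, MeasurableSet (A i) := fun i =>
      MeasurableSet.iUnion fun n =>
        (Lp.stronglyMeasurable ((G i n : Lp E 1 μ))).measurable (hBo i).measurableSet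
    have hKA : ∀ i : ℕ × ℕ, ∀ f ∈ K, μ ((((f : Lp E 1 μ) : Ω → E) ⁻¹' B i) \ A i) = 0 :=
      fun i f hf => hG i ⟨f, hf⟩
    set Φ₀ : Ω → Set E := fun ω => {x | ∀ i : ℕ × ℕ, x ∈ B i → ω ∈ A i} with hΦ₀
    set N : Set Ω := ⋃ i : ℕ × ℕ, (((f₀ : Ω → E) ⁻¹' B i) \ A i) with hNdef
    have hNmeas : MeasurableSet N := MeasurableSet.iUnion fun i =>
      ((Lp.stronglyMeasurable f₀).measurable (hBo i).measurableSet).diff (hAmeas i)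
    have hNnull : μ N = 0 := measure_iUnion_null fun i => hKA i f₀ hf₀
    refine ⟨fun ω => if ω ∈ N then Set.univ else Φ₀ ω, ?_, ?_, ?_, ?_⟩
    · -- nonempty values
      intro ω
      by_cases hω : ω ∈ N
      · simp [hω]
      · simp only [hω, if_false]
        refine ⟨(f₀ : Ω → E) ω, fun i hBi => ?_⟩
        by_contra hAi
        exact hω (Set.mem_iUnion.2 ⟨i, ⟨hBi, hAi⟩⟩)
    · -- closed values
      intro ω
      by_cases hω : ω ∈ N
      · simp [hω]
      · simp only [hω, if_false]
        have : Φ₀ ω = ⋂ i : ℕ × ℕ, {x | x ∈ B i → ω ∈ A i} := by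
          ext x; simp [hΦ₀, Set.mem_iInter]
        rw [this]
        refine isClosed_iInter fun i => ?_
        by_cases hAi : ω ∈ A i
        · have : {x | x ∈ B i → ω ∈ A i} = Set.univ := by
            ext x; simp [hAi]
          rw [this]; exact isClosed_univ
        · have : {x | x ∈ B i → ω ∈ A i} = (B i)ᶜ := by
            ext x; simp [hAi]
          rw [this]; exact (hBo i).isClosed_compl
    · -- measurable graph
      have hgraph : {p : Ω × E | p.2 ∈ (if p.1 ∈ N then Set.univ else Φ₀ p.1)} =
          (N ×ˢ (Set.univ : Set E)) ∪ ((Nᶜ ×ˢ (Set.univ : Set E)) ∩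
            ⋂ i : ℕ × ℕ, ((A i ×ˢ (Set.univ : Set E)) ∪
              ((Set.univ : Set Ω) ×ˢ (B i)ᶜ))) := by
        ext ⟨ω, x⟩
        simp only [Set.mem_setOf_eq, Set.mem_union, Set.mem_inter_iff, Set.mem_prod,
          Set.mem_iInter, Set.mem_univ, Set.mem_compl_iff, and_true, true_and]
        by_cases hω : ω ∈ N
        · simp [hω]
        · simp only [hω, if_false, not_false_eq_true, true_and, false_or]
          constructor
          · intro hx
            refine fun i => ?_
            by_cases hBi : x ∈ B i
            · exact Or.inl (hx i hBi)
            · exact Or.inr hBi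
          · intro hx i hBi
            rcases hx i with h' | h'
            · exact h'
            · exact absurd hBi h' 
      rw [show {p : Ω × E | p.2 ∈ (fun ω => if ω ∈ N then Set.univ else Φ₀ ω) p.1} =
          {p : Ω × E | p.2 ∈ (if p.1 ∈ N then Set.univ else Φ₀ p.1)} from rfl, hgraph]
      refine ((hNmeas.prod MeasurableSet.univ).union
        (((hNmeas.compl).prod MeasurableSet.univ).inter (MeasurableSet.iInter fun i =>
          ((hAmeas i).prod MeasurableSet.univ).union
            (MeasurableSet.univ.prod (hBo i).measurableSet.compl))))
    · -- K = selectorsL1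
      refine Set.Subset.antisymm ?_ ?_
      · intro f hf
        have hae : ∀ᵐ ω ∂μ, ∀ i : ℕ × ℕ, ω ∉ (((f : Ω → E) ⁻¹' B i) \ A i) :=
          MeasureTheory.ae_all_iff.2 fun i => measure_eq_zero_iff_ae_notMem.1 (hKA i f hf)
        show ∀ᵐ ω ∂μ, (f : Ω → E) ω ∈ _
        filter_upwards [hae] with ω hω
        by_cases hωN : ω ∈ N
        · simp [hωN]
        · simp only [hωN, if_false]
          intro i hBi
          by_contra hAi
          exact hω i (⟨hBi, hAi⟩)
      · intro h hh
        have hΦ₀h : ∀ᵐ ω ∂μ, (h : Ω → E) ω ∈ Φ₀ ω := by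
          have hNae : ∀ᵐ ω ∂μ, ω ∉ N := measure_eq_zero_iff_ae_notMem.1 hNnull
          filter_upwards [hh, hNae] with ω h1 h2
          simpa [h2] using h1
        refine hcl.closure_subset ?_
        rw [Metric.mem_closure_iff]
        intro ε hε
        set τ := (μ Set.univ).toReal with hτdef
        have hτ : 0 ≤ τ := ENNReal.toReal_nonneg
        set r : ℝ := ε / (4 * (τ + 1)) with hr
        have hrpos : 0 < r := by positivity
        obtain ⟨n₀, hn₀⟩ := exists_nat_one_div_lt (show (0:ℝ) < r / 2 by positivity)
        set gs : ℕ → Lp E 1 μ := fun m =>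
          (G (((Denumerable.eqv (ℕ × ℕ)).symm m).1, n₀)
            (((Denumerable.eqv (ℕ × ℕ)).symm m).2) : Lp E 1 μ) with hgs
        set C : ℕ → Set Ω := fun m =>
          {ω | (‖(h : Ω → E) ω - (gs m : Ω → E) ω‖₊ : ℝ≥0∞) ≤ ENNReal.ofReal r} with hCdef
        have hCmeas : ∀ m, MeasurableSet (C m) := fun m =>
          measurableSet_le (((Lp.stronglyMeasurable h).sub
            (Lp.stronglyMeasurable (gs m))).measurable.nnnorm.coe_nnreal_ennreal) measurable_const
        have hcov : ∀ᵐ ω ∂μ, ∃ m, ω ∈ C m := by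
          filter_upwards [hΦ₀h] with ω hω
          obtain ⟨j, hj⟩ := Metric.denseRange_iff.1 hqd ((h : Ω → E) ω) _
            (show (0:ℝ) < 1 / (n₀ + 1) by positivity)
          have hBmem : (h : Ω → E) ω ∈ B (j, n₀) := by
            simpa [hBdef, Metric.mem_ball, dist_comm] using hj
          have hA' : ω ∈ A (j, n₀) := hω (j, n₀) hBmem
          obtain ⟨k, hk⟩ := Set.mem_iUnion.1 hA'
          refine ⟨(Denumerable.eqv (ℕ × ℕ)) (j, k), ?_⟩
          have hem : ((Denumerable.eqv (ℕ × ℕ)).symm ((Denumerable.eqv (ℕ × ℕ)) (j, k)))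
              = (j, k) := Equiv.symm_apply_apply _ _
          have hgseq : gs ((Denumerable.eqv (ℕ × ℕ)) (j, k)) = (G (j, n₀) k : Lp E 1 μ) := by
            rw [hgs]; simp only [hem]
          have hdist : dist ((h : Ω → E) ω) (((G (j, n₀) k : Lp E 1 μ) : Ω → E) ω) ≤ r := by
            have h1 : dist ((h : Ω → E) ω) (q j) < 1 / (n₀ + 1) := by
              simpa [hBdef, Metric.mem_ball] using hBmem
            have h2 : dist (((G (j, n₀) k : Lp E 1 μ) : Ω → E) ω) (q j) < 1 / (n₀ + 1) := by
              simpa [hBdef, Metric.mem_ball] using hk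
            calc dist ((h : Ω → E) ω) (((G (j, n₀) k : Lp E 1 μ) : Ω → E) ω)
                ≤ dist ((h : Ω → E) ω) (q j) +
                  dist (q j) (((G (j, n₀) k : Lp E 1 μ) : Ω → E) ω) := dist_triangle _ _ _
              _ ≤ 1 / (n₀ + 1) + 1 / (n₀ + 1) := by
                  rw [dist_comm (q j)]; exact add_le_add h1.le h2.le
              _ ≤ r / 2 + r / 2 := add_le_add hn₀.le hn₀.le
              _ = r := by ring
          show (‖(h : Ω → E) ω - (gs _ : Ω → E) ω‖₊ : ℝ≥0∞) ≤ ENNReal.ofReal r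
          rw [hgseq, ← enorm_eq_nnnorm, ← ofReal_norm]
          exact ENNReal.ofReal_le_ofReal (by rwa [← dist_eq_norm] )
        obtain ⟨p, hpK, hp⟩ := HiaiUmegakiAux.key_approx hK hf₀ h C hCmeas hcov gs
          (fun m => (G _ _).2) (ENNReal.ofReal r)
          (fun m => Filter.Eventually.of_forall fun ω hω => hω)
          (show (0:ℝ≥0∞) < ENNReal.ofReal (ε/4) from ENNReal.ofReal_pos.2 (by positivity))
        have hμle : μ Set.univ ≤ ENNReal.ofReal (τ + 1) := by
          rw [← ENNReal.ofReal_toReal (measure_ne_top μ Set.univ)]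
          exact ENNReal.ofReal_le_ofReal (by linarith)
        have h1 : ENNReal.ofReal r * μ Set.univ ≤ ENNReal.ofReal (ε/4) := by
          calc ENNReal.ofReal r * μ Set.univ
              ≤ ENNReal.ofReal r * ENNReal.ofReal (τ + 1) := mul_le_mul_right hμle _
            _ = ENNReal.ofReal (r * (τ + 1)) := (ENNReal.ofReal_mul hrpos.le).symm
            _ ≤ ENNReal.ofReal (ε/4) := ENNReal.ofReal_le_ofReal (le_of_eq (by
                rw [hr]; field_simp))
        have htotal : ∫⁻ ω, (‖(p : Ω → E) ω - (h : Ω → E) ω‖₊ : ℝ≥0∞) ∂μ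
            ≤ ENNReal.ofReal (ε/2) := by
          refine hp.trans ?_
          calc ENNReal.ofReal r * μ Set.univ + ENNReal.ofReal (ε/4)
              ≤ ENNReal.ofReal (ε/4) + ENNReal.ofReal (ε/4) := add_le_add h1 le_rfl
            _ = ENNReal.ofReal (ε/4 + ε/4) := (ENNReal.ofReal_add (by positivity)
                (by positivity)).symm
            _ = ENNReal.ofReal (ε/2) := by rw [show ε/4 + ε/4 = ε/2 by ring]
        have hdisteq : dist h p
            = (∫⁻ ω, (‖(p : Ω → E) ω - (h : Ω → E) ω‖₊ : ℝ≥0∞) ∂μ).toReal := by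
          rw [Lp.dist_def, MeasureTheory.eLpNorm_one_eq_lintegral_enorm]
          congr 1
          refine lintegral_congr fun ω => ?_
          simp only [Pi.sub_apply]
          rw [enorm_eq_nnnorm]; congr 1
          rw [← nnnorm_neg]
          congr 1
          abel
        refine ⟨p, hpK, ?_⟩
        rw [hdisteq]
        have := ENNReal.toReal_le_of_le_ofReal (by positivity : (0:ℝ) ≤ ε/2) htotal
        linarith
  · -- easy direction
    rintro ⟨Φ, hne, hclv, hgr, rfl⟩
    intro f hf g hg A hA h hh
    show ∀ᵐ ω ∂μ, (h : Ω → E) ω ∈ Φ ω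
    filter_upwards [hf, hg, hh] with ω h1 h2 h3
    rw [h3]
    by_cases hω : ω ∈ A
    · rwa [Set.piecewise_eq_of_mem _ _ _ hω]
    · rwa [Set.piecewise_eq_of_notMem _ _ _ hω]
end
end

section
/- Let (Ω,Σ,μ) be a nonatomic complete finite measure space and E a separable Banach space. If K is a nonempty decomposable subset of L¹(μ,E), then the norm closure of the set {∫ f dμ : f ∈ K} is a convex subset of E. -/
open MeasureTheory TopologicalSpace
open scoped Classical

noncomputable section

open Set Filter
open scoped ENNReal

section Aux

variable {Ω : Type*} [MeasurableSpace Ω] {μ : Measure Ω} [IsFiniteMeasure μ]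

lemma myHalfSub (hna : Nonatomic μ) {A : Set Ω} (hA : MeasurableSet A) (h0 : 0 < μ A) :
    ∃ B ⊆ A, MeasurableSet B ∧ 0 < μ B ∧ μ B ≤ μ A / 2 := by
  obtain ⟨C, hCA, hCm, hC0, hClt⟩ := hna A hA h0
  have hfin : μ A ≠ ∞ := measure_ne_top μ A
  have hdiff : μ (A \ C) = μ A - μ C := measure_diff hCA hCm.nullMeasurableSet (measure_ne_top μ C)
  by_cases hc : μ C ≤ μ A / 2
  · exact ⟨C, hCA, hCm, hC0, hc⟩
  · refine ⟨A \ C, diff_subset, hA.diff hCm, ?_, ?_⟩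
    · rw [hdiff]; exact tsub_pos_of_lt hClt
    · rw [hdiff]
      calc μ A - μ C ≤ μ A - μ A / 2 := tsub_le_tsub_left (le_of_not_ge hc) _
      _ = μ A / 2 := ENNReal.sub_half hfin

lemma mySmallSub (hna : Nonatomic μ) {A : Set Ω} (hA : MeasurableSet A) (h0 : 0 < μ A)
    {ε : ℝ≥0∞} (hε : 0 < ε) :
    ∃ B ⊆ A, MeasurableSet B ∧ 0 < μ B ∧ μ B < ε := by
  have key : ∀ n : ℕ, ∃ B ⊆ A, MeasurableSet B ∧ 0 < μ B ∧ μ B ≤ μ A * 2⁻¹ ^ n := by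
    intro n
    induction n with
    | zero => exact ⟨A, subset_rfl, hA, h0, by simp⟩
    | succ n ih =>
      obtain ⟨B, hBA, hBm, hB0, hBle⟩ := ih
      obtain ⟨C, hCB, hCm, hC0, hCle⟩ := myHalfSub hna hBm hB0
      refine ⟨C, hCB.trans hBA, hCm, hC0, ?_⟩
      calc μ C ≤ μ B / 2 := hCle
      _ ≤ μ A * 2⁻¹ ^ n / 2 := by gcongr
      _ = μ A * 2⁻¹ ^ (n + 1) := by
          rw [pow_succ, div_eq_mul_inv, mul_assoc]
  have htend : Filter.Tendsto (fun n : ℕ => μ A * 2⁻¹ ^ n) Filter.atTop (nhds 0) := by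
    have h1 : Filter.Tendsto (fun n : ℕ => (2⁻¹ : ℝ≥0∞) ^ n) Filter.atTop (nhds 0) :=
      ENNReal.tendsto_pow_atTop_nhds_zero_of_lt_one (by norm_num)
    simpa using ENNReal.Tendsto.const_mul h1 (Or.inr (measure_ne_top μ A))
  obtain ⟨n, hn⟩ := (htend.eventually_lt_const hε).exists
  obtain ⟨B, hBA, hBm, hB0, hBle⟩ := key n
  exact ⟨B, hBA, hBm, hB0, hBle.trans_lt hn⟩


lemma mySierpinski (hna : Nonatomic μ) {A : Set Ω} (hA : MeasurableSet A)
    {r : ℝ≥0∞} (hr : r ≤ μ A) :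
    ∃ B ⊆ A, MeasurableSet B ∧ μ B = r := by
  have hrfin : r ≠ ∞ := (hr.trans_lt (measure_lt_top μ A)).ne
  set Good : Set Ω → Prop := fun B => B ⊆ A ∧ MeasurableSet B ∧ μ B ≤ r with hGood
  have step : ∀ B : {B : Set Ω // Good B}, ∃ C : Set Ω, C ⊆ A \ B.1 ∧ MeasurableSet C ∧
      μ B.1 + μ C ≤ r ∧
      ∀ D, D ⊆ A \ B.1 → MeasurableSet D → μ B.1 + μ D ≤ r → μ D ≤ 2 * μ C := by
    rintro ⟨B, hBA, hBm, hBr⟩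
    set S : Set ℝ≥0∞ := {m | ∃ D, D ⊆ A \ B ∧ MeasurableSet D ∧ μ B + μ D ≤ r ∧ μ D = m} with hS
    have h0S : (0 : ℝ≥0∞) ∈ S := ⟨∅, empty_subset _, MeasurableSet.empty, by simpa, by simp⟩
    have hSbd : ∀ m ∈ S, m ≤ r := by
      rintro m ⟨D, _, _, hle, rfl⟩
      exact le_trans (le_add_self) hle
    set s := sSup S with hs
    have hsr : s ≤ r := sSup_le hSbd
    have hsfin : s ≠ ∞ := (hsr.trans_lt hrfin.lt_top).ne
    by_cases hs0 : s = 0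
    · refine ⟨∅, empty_subset _, MeasurableSet.empty, by simpa, ?_⟩
      intro D hD hDm hDr
      have : μ D ≤ s := le_sSup ⟨D, hD, hDm, hDr, rfl⟩
      simp [hs0] at this
      simp [this]
    · have hhalf : s / 2 < s := ENNReal.half_lt_self hs0 hsfin
      obtain ⟨m, hmS, hml⟩ := lt_sSup_iff.mp hhalf
      obtain ⟨C, hC1, hC2, hC3, rfl⟩ := hmS
      refine ⟨C, hC1, hC2, hC3, ?_⟩
      intro D hD hDm hDr
      have h1 : μ D ≤ s := le_sSup ⟨D, hD, hDm, hDr, rfl⟩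
      have h2 : s ≤ 2 * μ C := by
        calc s = s / 2 + s / 2 := (ENNReal.add_halves s).symm
        _ ≤ μ C + μ C := add_le_add hml.le hml.le
        _ = 2 * μ C := (two_mul _).symm
      exact h1.trans h2
  choose next hnextsub hnextm hnextle hnextmax using step
  have hemp : Good ∅ := ⟨empty_subset _, MeasurableSet.empty, by simp⟩
  have hstep : ∀ B : {B : Set Ω // Good B}, Good (B.1 ∪ next B) := by
    rintro B
    obtain ⟨hBA, hBm, hBr⟩ := B.2
    refine ⟨union_subset hBA ((hnextsub B).trans diff_subset), hBm.union (hnextm B), ?_⟩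
    calc μ (B.1 ∪ next B) ≤ μ B.1 + μ (next B) := measure_union_le _ _
    _ ≤ r := hnextle B
  set seq : ℕ → {B : Set Ω // Good B} :=
    fun n => Nat.rec ⟨∅, hemp⟩ (fun _ B => ⟨B.1 ∪ next B, hstep B⟩) n with hseq
  have hseqsucc : ∀ n, (seq (n + 1)).1 = (seq n).1 ∪ next (seq n) := fun n => rfl
  have hdisj : ∀ n, Disjoint (seq n).1 (next (seq n)) := by
    intro n
    exact disjoint_of_subset_right (hnextsub _) disjoint_sdiff_right
  have hμsucc : ∀ n, μ (seq (n + 1)).1 = μ (seq n).1 + μ (next (seq n)) := by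
    intro n
    rw [hseqsucc n, measure_union (hdisj n) (hnextm _)]
  have hmono : Monotone (fun n => (seq n).1) := by
    apply monotone_nat_of_le_succ
    intro n
    rw [hseqsucc n]
    exact subset_union_left
  set Binf : Set Ω := ⋃ n, (seq n).1 with hBinf
  have hBinfm : MeasurableSet Binf := MeasurableSet.iUnion (fun n => (seq n).2.2.1)
  have hBinfA : Binf ⊆ A := iUnion_subset (fun n => (seq n).2.1)
  have hμBinf : μ Binf = ⨆ n, μ (seq n).1 := Directed.measure_iUnion (hmono.directed_le)
  have hBinfr : μ Binf ≤ r := by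
    rw [hμBinf]; exact iSup_le fun n => (seq n).2.2.2
  refine ⟨Binf, hBinfA, hBinfm, ?_⟩
  by_contra hne
  have hlt : μ Binf < r := lt_of_le_of_ne hBinfr hne
  have hpos : 0 < μ (A \ Binf) := by
    rw [measure_diff hBinfA hBinfm.nullMeasurableSet (measure_ne_top μ Binf)]
    exact tsub_pos_of_lt (hlt.trans_le hr)
  obtain ⟨C, hCsub, hCm, hC0, hClt⟩ := mySmallSub hna (hA.diff hBinfm) hpos
      (tsub_pos_of_lt hlt)
  -- for every n, μ C is a candidate
  have hcand : ∀ n, μ C ≤ 2 * μ (next (seq n)) := by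
    intro n
    refine hnextmax (seq n) C (hCsub.trans ?_) hCm ?_
    · exact diff_subset_diff_right (le_iSup (fun n => (seq n).1) n)
    · have h1 : μ (seq n).1 + μ C ≤ μ Binf + μ C :=
        add_le_add_left (measure_mono (le_iSup (fun n => (seq n).1) n)) _
      refine h1.trans ?_
      rw [add_comm]
      exact (lt_tsub_iff_right.mp hClt).le
  set c : ℝ≥0∞ := μ C / 2 with hc
  have hc0 : 0 < c := ENNReal.div_pos hC0.ne' (by norm_num)
  have hcfin : c ≠ ∞ := by
    have : c ≤ μ C := ENNReal.half_le_self
    exact (this.trans_lt (measure_lt_top μ C)).ne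
  -- μ (seq n) ≥ n * c
  have hgrow : ∀ n : ℕ, (n : ℝ≥0∞) * c ≤ μ (seq n).1 := by
    intro n
    induction n with
    | zero => simp
    | succ n ih =>
      have h1 : c ≤ μ (next (seq n)) := by
        have := hcand n
        rw [hc]
        rw [ENNReal.div_le_iff (by norm_num) (by norm_num), mul_comm]
        exact this
      calc ((n + 1 : ℕ) : ℝ≥0∞) * c = (n : ℝ≥0∞) * c + c := by
            push_cast; ring
      _ ≤ μ (seq n).1 + μ (next (seq n)) := add_le_add ih h1
      _ = μ (seq (n + 1)).1 := (hμsucc n).symm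
  obtain ⟨n, hn⟩ := ENNReal.exists_nat_gt ((ENNReal.div_lt_top hrfin hc0.ne').ne : r / c ≠ ∞)
  have hnc : r < n * c := by
    rwa [ENNReal.div_lt_iff (Or.inl hc0.ne') (Or.inl hcfin)] at hn
  exact absurd ((seq n).2.2.2) (not_le.mpr (hnc.trans_le (hgrow n)))


variable {E : Type*} [NormedAddCommGroup E] [NormedSpace ℝ E] [CompleteSpace E]

lemma myApprox (hna : Nonatomic μ) {h : Ω → E} (hint : Integrable h μ)
    {t : ℝ} (ht : t ∈ Set.Icc (0:ℝ) 1) {ε : ℝ} (hε : 0 < ε) :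
    ∃ A : Set Ω, MeasurableSet A ∧
      ‖(∫ ω in A, h ω ∂μ) - t • ∫ ω, h ω ∂μ‖ < ε := by
  set P : (Ω → E) → Prop := fun h => ∀ t : ℝ, t ∈ Set.Icc (0:ℝ) 1 → ∀ ε : ℝ, 0 < ε →
    ∃ A : Set Ω, MeasurableSet A ∧
      ‖(∫ ω in A, h ω ∂μ) - t • ∫ ω, h ω ∂μ‖ < ε with hP
  have main : P h := by
    refine Integrable.induction P ?h_ind ?h_add ?h_closed ?h_ae hint
    case h_ind =>
      intro c s hs _ t ht ε hε
      obtain ⟨B, hBs, hBm, hBμ⟩ := mySierpinski hna hs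
        (show ENNReal.ofReal t * μ s ≤ μ s from
          mul_le_of_le_one_left zero_le (ENNReal.ofReal_le_one.mpr ht.2))
      refine ⟨B, hBm, ?_⟩
      have h1 : (∫ ω in B, s.indicator (fun _ => c) ω ∂μ) = (μ B).toReal • c := by
        rw [setIntegral_indicator hs, inter_eq_self_of_subset_left hBs, setIntegral_const, measureReal_def]
      have h2 : (∫ ω, s.indicator (fun _ => c) ω ∂μ) = (μ s).toReal • c := by
        rw [integral_indicator hs, setIntegral_const, measureReal_def]
      rw [h1, h2, hBμ, ENNReal.toReal_mul, ENNReal.toReal_ofReal ht.1, mul_smul, smul_smul]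
      simpa using hε
    case h_add =>
      intro f g hdisj hf hg hPf hPg t ht ε hε
      borelize E
      set f' := hf.1.mk f with hf'
      have hf'm : StronglyMeasurable f' := hf.1.stronglyMeasurable_mk
      have hff' : f =ᵐ[μ] f' := hf.1.ae_eq_mk
      set S : Set Ω := {x | f' x ≠ 0} with hSdef
      have hSm : MeasurableSet S := by
        have : S = f' ⁻¹' ({0}ᶜ) := rfl
        rw [this]
        exact hf'm.measurable (measurableSet_singleton 0).compl
      have hgS : ∀ᵐ x ∂μ, x ∈ S → g x = 0 := by
        filter_upwards [hff'] with x hx hxS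
        by_contra hgx
        have hxg : x ∈ Function.support g := hgx
        have hxf : f x = 0 := by
          by_contra hfx
          exact (Set.disjoint_left.mp hdisj hfx) hxg
        exact hxS (hx ▸ hxf)
      have hfS : ∀ᵐ x ∂μ, x ∉ S → f x = 0 := by
        filter_upwards [hff'] with x hx hxS
        rw [hx]
        simpa [hSdef] using hxS
      obtain ⟨A₁, hA₁m, hA₁⟩ := hPf t ht (ε/2) (by linarith)
      obtain ⟨A₂, hA₂m, hA₂⟩ := hPg t ht (ε/2) (by linarith)
      set A : Set Ω := (A₁ ∩ S) ∪ (A₂ \ S) with hAdef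
      have hAm : MeasurableSet A := (hA₁m.inter hSm).union (hA₂m.diff hSm)
      refine ⟨A, hAm, ?_⟩
      have zero_off : ∀ (D : Set Ω), MeasurableSet D → D ⊆ Sᶜ → (∫ ω in D, f ω ∂μ) = 0 := by
        intro D hDm hDS
        have : ∀ᵐ x ∂μ.restrict D, f x = 0 := by
          rw [ae_restrict_iff' hDm]
          filter_upwards [hfS] with x hx hxD
          exact hx (hDS hxD)
        rw [integral_congr_ae this, integral_zero]
      have zero_on : ∀ (D : Set Ω), MeasurableSet D → D ⊆ S → (∫ ω in D, g ω ∂μ) = 0 := by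
        intro D hDm hDS
        have : ∀ᵐ x ∂μ.restrict D, g x = 0 := by
          rw [ae_restrict_iff' hDm]
          filter_upwards [hgS] with x hx hxD
          exact hx (hDS hxD)
        rw [integral_congr_ae this, integral_zero]
      have hdisjA : Disjoint (A₁ ∩ S) (A₂ \ S) :=
        disjoint_of_subset inter_subset_right Subset.rfl disjoint_sdiff_right
      have split1 : (∫ ω in A₁, f ω ∂μ) = ∫ ω in A₁ ∩ S, f ω ∂μ := by
        have hu : (∫ ω in (A₁ ∩ S) ∪ (A₁ \ S), f ω ∂μ)
            = (∫ ω in A₁ ∩ S, f ω ∂μ) + ∫ ω in A₁ \ S, f ω ∂μ :=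
          setIntegral_union (disjoint_of_subset inter_subset_right Subset.rfl
            disjoint_sdiff_right) (hA₁m.diff hSm) hf.integrableOn hf.integrableOn
        rw [inter_union_diff] at hu
        rw [hu, zero_off (A₁ \ S) (hA₁m.diff hSm) (diff_subset_compl _ _), add_zero]
      have split2 : (∫ ω in A₂, g ω ∂μ) = ∫ ω in A₂ \ S, g ω ∂μ := by
        have hu : (∫ ω in (A₂ ∩ S) ∪ (A₂ \ S), g ω ∂μ)
            = (∫ ω in A₂ ∩ S, g ω ∂μ) + ∫ ω in A₂ \ S, g ω ∂μ :=
          setIntegral_union (disjoint_of_subset inter_subset_right Subset.rfl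
            disjoint_sdiff_right) (hA₂m.diff hSm) hg.integrableOn hg.integrableOn
        rw [inter_union_diff] at hu
        rw [hu, zero_on (A₂ ∩ S) (hA₂m.inter hSm) inter_subset_right, zero_add]
      have hfA : (∫ ω in A, f ω ∂μ) = ∫ ω in A₁, f ω ∂μ := by
        rw [hAdef, setIntegral_union hdisjA (hA₂m.diff hSm) (hf.integrableOn)
          (hf.integrableOn), zero_off (A₂ \ S) (hA₂m.diff hSm) (diff_subset_compl _ _), add_zero,
          split1]
      have hgA : (∫ ω in A, g ω ∂μ) = ∫ ω in A₂, g ω ∂μ := by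
        rw [hAdef, setIntegral_union hdisjA (hA₂m.diff hSm) (hg.integrableOn)
          (hg.integrableOn), zero_on (A₁ ∩ S) (hA₁m.inter hSm) inter_subset_right, zero_add,
          split2]
      have hsplitA : (∫ ω in A, (f + g) ω ∂μ) = (∫ ω in A, f ω ∂μ) + ∫ ω in A, g ω ∂μ := by
        simp only [Pi.add_apply]
        exact integral_add hf.integrableOn hg.integrableOn
      have hsplit : (∫ ω, (f + g) ω ∂μ) = (∫ ω, f ω ∂μ) + ∫ ω, g ω ∂μ := by
        simp only [Pi.add_apply]
        exact integral_add hf hg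
      rw [hsplitA, hsplit, hfA, hgA, smul_add]
      calc ‖(∫ ω in A₁, f ω ∂μ) + (∫ ω in A₂, g ω ∂μ) -
            (t • (∫ ω, f ω ∂μ) + t • ∫ ω, g ω ∂μ)‖
          = ‖((∫ ω in A₁, f ω ∂μ) - t • ∫ ω, f ω ∂μ) +
            ((∫ ω in A₂, g ω ∂μ) - t • ∫ ω, g ω ∂μ)‖ := by congr 1; abel
      _ ≤ ‖(∫ ω in A₁, f ω ∂μ) - t • ∫ ω, f ω ∂μ‖ +
            ‖(∫ ω in A₂, g ω ∂μ) - t • ∫ ω, g ω ∂μ‖ := norm_add_le _ _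
      _ < ε := by linarith
    case h_closed =>
      refine isClosed_of_closure_subset ?_
      intro u hu t ht ε hε
      obtain ⟨v, hv, hvu⟩ := Metric.mem_closure_iff.mp hu (ε/4) (by linarith)
      obtain ⟨A, hAm, hA⟩ := hv t ht (ε/2) (by linarith)
      refine ⟨A, hAm, ?_⟩
      have hui : Integrable (⇑u) μ := L1.integrable_coeFn u
      have hvi : Integrable (⇑v) μ := L1.integrable_coeFn v
      have hdist : (∫ ω, ‖u ω - v ω‖ ∂μ) < ε/4 := by
        have h1 : ‖u - v‖ = ∫ ω, ‖(u - v) ω‖ ∂μ := L1.norm_eq_integral_norm _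
        have h2 : (∫ ω, ‖(u - v) ω‖ ∂μ) = ∫ ω, ‖u ω - v ω‖ ∂μ := by
          refine integral_congr_ae ?_
          filter_upwards [Lp.coeFn_sub u v] with x hx
          rw [hx]; rfl
        rw [← h2, ← h1, ← dist_eq_norm u v]
        exact hvu
      have est1 : ‖(∫ ω in A, u ω ∂μ) - ∫ ω in A, v ω ∂μ‖ ≤ ε/4 := by
        rw [← integral_sub hui.integrableOn hvi.integrableOn]
        calc ‖∫ ω in A, (u ω - v ω) ∂μ‖ ≤ ∫ ω in A, ‖u ω - v ω‖ ∂μ :=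
              norm_integral_le_integral_norm _
        _ ≤ ∫ ω, ‖u ω - v ω‖ ∂μ :=
              setIntegral_le_integral (hui.sub hvi).norm
                (Eventually.of_forall fun x => norm_nonneg _)
        _ ≤ ε/4 := hdist.le
      have est2 : ‖t • (∫ ω, v ω ∂μ) - t • ∫ ω, u ω ∂μ‖ ≤ ε/4 := by
        rw [← smul_sub, norm_smul, Real.norm_eq_abs, abs_of_nonneg ht.1]
        calc t * ‖(∫ ω, v ω ∂μ) - ∫ ω, u ω ∂μ‖ ≤ 1 * ‖(∫ ω, v ω ∂μ) - ∫ ω, u ω ∂μ‖ := by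
              apply mul_le_mul_of_nonneg_right ht.2 (norm_nonneg _)
        _ = ‖∫ ω, (v ω - u ω) ∂μ‖ := by rw [one_mul, integral_sub hvi hui]
        _ ≤ ∫ ω, ‖v ω - u ω‖ ∂μ := norm_integral_le_integral_norm _
        _ = ∫ ω, ‖u ω - v ω‖ ∂μ := by simp_rw [norm_sub_rev]
        _ ≤ ε/4 := hdist.le
      calc ‖(∫ ω in A, u ω ∂μ) - t • ∫ ω, u ω ∂μ‖
          = ‖((∫ ω in A, u ω ∂μ) - ∫ ω in A, v ω ∂μ) +
            ((∫ ω in A, v ω ∂μ) - t • ∫ ω, v ω ∂μ) +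
            (t • (∫ ω, v ω ∂μ) - t • ∫ ω, u ω ∂μ)‖ := by congr 1; abel
      _ ≤ ‖(∫ ω in A, u ω ∂μ) - ∫ ω in A, v ω ∂μ‖ +
            ‖(∫ ω in A, v ω ∂μ) - t • ∫ ω, v ω ∂μ‖ +
            ‖t • (∫ ω, v ω ∂μ) - t • ∫ ω, u ω ∂μ‖ := norm_add₃_le
      _ < ε := by linarith
    case h_ae =>
      intro f g hfg hf hPf t ht ε hε
      obtain ⟨A, hAm, hA⟩ := hPf t ht ε hε
      refine ⟨A, hAm, ?_⟩
      rwa [← integral_congr_ae (ae_restrict_of_ae hfg),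
        ← integral_congr_ae hfg]
  exact main t ht ε hε


end Aux

/-- Over a nonatomic finite measure space, the norm closure of the set of integrals of a
nonempty decomposable subset of `L¹(μ,E)` is convex. -/
theorem convex_closure_integral_of_decomposable_nonatomic
    {Ω : Type*} [MeasurableSpace Ω] (μ : Measure Ω) [IsFiniteMeasure μ] [μ.IsComplete]
    {E : Type*} [NormedAddCommGroup E] [NormedSpace ℝ E] [CompleteSpace E]
    [TopologicalSpace.SeparableSpace E]
    (hna : Nonatomic μ)
    (K : Set (Lp E 1 μ)) (hKne : K.Nonempty) (hdec : Decomposable μ K) :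
    Convex ℝ (closure {x : E | ∃ f ∈ K, ∫ ω, (f : Ω → E) ω ∂μ = x}) := by
  set S : Set E := {x : E | ∃ f ∈ K, ∫ ω, (f : Ω → E) ω ∂μ = x} with hS
  have key : ∀ f ∈ K, ∀ g ∈ K, ∀ a b : ℝ, 0 ≤ a → 0 ≤ b → a + b = 1 → ∀ ε : ℝ, 0 < ε →
      ∃ x ∈ S, ‖x - (a • (∫ ω, (f : Ω → E) ω ∂μ) + b • ∫ ω, (g : Ω → E) ω ∂μ)‖ < ε := by
    intro f hf g hg a b ha hb hab ε hε
    have hfi : Integrable (⇑f) μ := L1.integrable_coeFn f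
    have hgi : Integrable (⇑g) μ := L1.integrable_coeFn g
    have hsub : Integrable (fun ω => f ω - g ω) μ := hfi.sub hgi
    obtain ⟨A, hAm, hA⟩ := myApprox hna hsub (Set.mem_Icc.mpr ⟨ha, by linarith⟩) hε
    set φ : Ω → E := A.piecewise (⇑f) (⇑g) with hφdef
    have hφi : Integrable φ μ := Integrable.piecewise hAm hfi.integrableOn hgi.integrableOn
    set F : Lp E 1 μ := hφi.toL1 φ with hF
    have hFK : F ∈ K := hdec f hf g hg A hAm F (hφi.coeFn_toL1)
    refine ⟨∫ ω, (F : Ω → E) ω ∂μ, ⟨F, hFK, rfl⟩, ?_⟩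
    have hFint : (∫ ω, (F : Ω → E) ω ∂μ) = (∫ ω in A, f ω ∂μ) + ∫ ω in Aᶜ, g ω ∂μ := by
      rw [integral_congr_ae (hφi.coeFn_toL1), hφdef,
        integral_piecewise hAm hfi.integrableOn hgi.integrableOn]
    have hcompl : (∫ ω in Aᶜ, g ω ∂μ) = (∫ ω, g ω ∂μ) - ∫ ω in A, g ω ∂μ := by
      rw [eq_sub_iff_add_eq, add_comm]
      exact integral_add_compl hAm hgi
    have hsubA : (∫ ω in A, (fun ω => f ω - g ω) ω ∂μ)
        = (∫ ω in A, f ω ∂μ) - ∫ ω in A, g ω ∂μ := integral_sub hfi.integrableOn hgi.integrableOn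
    have hsubT : (∫ ω, (fun ω => f ω - g ω) ω ∂μ)
        = (∫ ω, f ω ∂μ) - ∫ ω, g ω ∂μ := integral_sub hfi hgi
    have hb' : b = 1 - a := by linarith
    have heq : (∫ ω, (F : Ω → E) ω ∂μ) - (a • (∫ ω, (f : Ω → E) ω ∂μ) + b • ∫ ω, (g : Ω → E) ω ∂μ)
        = (∫ ω in A, (fun ω => f ω - g ω) ω ∂μ) - a • ∫ ω, (fun ω => f ω - g ω) ω ∂μ := by
      rw [hFint, hcompl, hsubA, hsubT, hb']
      module
    rw [heq]
    exact hA
  intro x hx y hy a b ha hb hab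
  rw [Metric.mem_closure_iff]
  intro ε hε
  obtain ⟨u, hu, hxu⟩ := Metric.mem_closure_iff.mp hx (ε/3) (by linarith)
  obtain ⟨v, hv, hyv⟩ := Metric.mem_closure_iff.mp hy (ε/3) (by linarith)
  obtain ⟨f, hf, hfu⟩ := hu
  obtain ⟨g, hg, hgv⟩ := hv
  obtain ⟨w, hw, hwd⟩ := key f hf g hg a b ha hb hab (ε/3) (by linarith)
  refine ⟨w, hw, ?_⟩
  have h1 : dist (a • x + b • y) (a • u + b • v) ≤ a * dist x u + b * dist y v := by
    calc dist (a • x + b • y) (a • u + b • v)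
        ≤ dist (a • x) (a • u) + dist (b • y) (b • v) := dist_add_add_le _ _ _ _
    _ = a * dist x u + b * dist y v := by
        rw [dist_smul₀, dist_smul₀, Real.norm_eq_abs, Real.norm_eq_abs,
          abs_of_nonneg ha, abs_of_nonneg hb]
  have h2 : dist (a • u + b • v) w < ε/3 := by
    rw [dist_comm, dist_eq_norm, ← hfu, ← hgv]
    exact hwd
  calc dist (a • x + b • y) w ≤ dist (a • x + b • y) (a • u + b • v) + dist (a • u + b • v) w :=
        dist_triangle _ _ _
  _ < (a * (ε/3) + b * (ε/3)) + ε/3 := by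
      have : a * dist x u + b * dist y v ≤ a * (ε/3) + b * (ε/3) := by
        apply add_le_add <;> apply mul_le_mul_of_nonneg_left (by linarith) (by assumption)
      apply add_lt_add_of_le_of_lt (h1.trans this) h2
  _ = ε * (2/3) := by nlinarith
  _ < ε := by linarith
end
end

section
/- Let (Ω,Σ,μ) be a complete finite measure space and E an infinite-dimensional separable Banach space. If for every nonempty decomposable subset K of L¹(μ,E), every separable Banach space F, and every continuous linear operator T : L¹(μ,E) → F the image T(K) is convex, then (Ω,Σ,μ) is saturated. -/
open MeasureTheory TopologicalSpace
open scoped Classical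

set_option maxHeartbeats 1000000
set_option synthInstance.maxHeartbeats 1000000

noncomputable section

universe u

/-- Every separable normed real vector space admits an injective continuous linear map
into `ℓ∞(ℕ)`. -/
lemma exists_injective_clm_to_linfty (L : Type*) [NormedAddCommGroup L] [NormedSpace ℝ L]
    [TopologicalSpace.SeparableSpace L] :
    ∃ J : L →L[ℝ] lp (fun _ : ℕ => ℝ) ⊤, Function.Injective J := by
  haveI : Nonempty L := ⟨0⟩
  obtain ⟨d, hd⟩ := TopologicalSpace.exists_dense_seq L
  -- norming functionals for the dense sequence
  have hφ : ∀ n : ℕ, ∃ φ : L →L[ℝ] ℝ, ‖φ‖ ≤ 1 ∧ (d n ≠ 0 → φ (d n) = ‖d n‖) := by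
    intro n
    by_cases hn : d n = 0
    · exact ⟨0, by simp, fun h => absurd hn h⟩
    · obtain ⟨φ, hφ1, hφ2⟩ := exists_dual_vector ℝ (d n) (norm_ne_zero_iff.mpr hn)
      exact ⟨φ, le_of_eq hφ1, fun _ => hφ2⟩
  choose φ hφ1 hφ2 using hφ
  have hbound : ∀ (g : L) (n : ℕ), ‖φ n g‖ ≤ ‖g‖ := by
    intro g n
    calc ‖φ n g‖ ≤ ‖φ n‖ * ‖g‖ := (φ n).le_opNorm g
    _ ≤ 1 * ‖g‖ := by
        have := hφ1 n
        nlinarith [norm_nonneg g]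
    _ = ‖g‖ := one_mul _
  have hmem : ∀ g : L, Memℓp (fun n : ℕ => φ n g) ⊤ := by
    intro g
    refine memℓp_infty ⟨‖g‖, ?_⟩
    rintro x ⟨n, rfl⟩
    exact hbound g n
  let J₀ : L →ₗ[ℝ] lp (fun _ : ℕ => ℝ) ⊤ :=
    { toFun := fun g => ⟨fun n => φ n g, hmem g⟩
      map_add' := by
        intro x y
        apply Subtype.ext
        funext n
        simp only [map_add]
        rfl
      map_smul' := by
        intro c x
        apply Subtype.ext
        funext n
        simp only [_root_.map_smul, RingHom.id_apply]
        rfl }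
  have hJ₀ : ∀ (g : L) (n : ℕ), (J₀ g : ∀ _ : ℕ, ℝ) n = φ n g := fun g n => rfl
  refine ⟨J₀.mkContinuous 1 ?_, ?_⟩
  · intro g
    rw [one_mul]
    exact lp.norm_le_of_forall_le (norm_nonneg g) fun n => hbound g n
  · intro x y hxy
    have hcoord : ∀ n, φ n x = φ n y := by
      intro n
      have := congrArg (fun z : lp (fun _ : ℕ => ℝ) ⊤ => (z : ∀ _ : ℕ, ℝ) n) hxy
      simpa [LinearMap.mkContinuous_apply, hJ₀] using this
    by_contra hne
    set v := x - y with hv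
    have hv0 : v ≠ 0 := sub_ne_zero_of_ne hne
    have hvpos : 0 < ‖v‖ := norm_pos_iff.mpr hv0
    have hφv : ∀ n, φ n v = 0 := by
      intro n
      simp [hv, map_sub, hcoord n]
    obtain ⟨n, hn⟩ := Metric.denseRange_iff.mp hd v (‖v‖ / 3) (by positivity)
    have hdist : ‖v - d n‖ < ‖v‖ / 3 := by
      rw [← dist_eq_norm]
      exact hn
    have hdn_norm : (2 : ℝ) / 3 * ‖v‖ ≤ ‖d n‖ := by
      have h1 : ‖v‖ - ‖d n‖ ≤ ‖v - d n‖ := norm_sub_norm_le v (d n)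
      linarith
    have hdn0 : d n ≠ 0 := by
      intro h0
      rw [h0, norm_zero] at hdn_norm
      linarith
    have heq : φ n (d n) = ‖d n‖ := hφ2 n hdn0
    have h2 : φ n (d n) = φ n (d n - v) := by
      rw [map_sub, hφv n, sub_zero]
    have h3 : φ n (d n - v) ≤ ‖d n - v‖ := by
      calc φ n (d n - v) ≤ ‖φ n (d n - v)‖ := le_abs_self _
      _ ≤ ‖d n - v‖ := hbound _ n
    have h4 : ‖d n - v‖ < ‖v‖ / 3 := by
      rw [norm_sub_rev]
      exact hdist
    linarith

/-- **Main theorem (necessity).** Let `E` be an infinite-dimensional separable Banach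
space. If for every nonempty decomposable `K ⊆ L¹(μ,E)`, every separable Banach space `F`,
and every continuous linear operator `T : L¹(μ,E) → F` the image `T(K)` is convex, then
`(Ω,Σ,μ)` is saturated. -/
theorem saturated_of_convex_image_of_decomposable
    {Ω : Type*} [MeasurableSpace Ω] (μ : Measure Ω) [IsFiniteMeasure μ] [μ.IsComplete]
    {E : Type u} [NormedAddCommGroup E] [NormedSpace ℝ E] [CompleteSpace E]
    [TopologicalSpace.SeparableSpace E]
    (hinf : ¬ FiniteDimensional ℝ E)
    (h : ∀ K : Set (Lp E 1 μ), K.Nonempty → Decomposable μ K →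
      ∀ (F : Type u) [NormedAddCommGroup F] [NormedSpace ℝ F] [CompleteSpace F]
        [TopologicalSpace.SeparableSpace F],
        ∀ T : Lp E 1 μ →L[ℝ] F, Convex ℝ (T '' K)) :
    Saturated μ := by
  intro S hS hpos hsep
  haveI := hsep
  -- a nonzero vector and a functional with value 1 on it
  obtain ⟨e, he⟩ : ∃ e : E, e ≠ 0 := by
    by_contra hc
    push_neg at hc
    haveI : Subsingleton E := subsingleton_of_forall_eq 0 fun x => hc x
    exact hinf inferInstance
  obtain ⟨g₀, hg₀norm, hg₀e⟩ := exists_dual_vector ℝ e (norm_ne_zero_iff.mpr he)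
  set ψ : E →L[ℝ] ℝ := ‖e‖⁻¹ • g₀ with hψdef
  have hψe : ψ e = 1 := by
    have hne : ‖e‖ ≠ 0 := norm_ne_zero_iff.mpr he
    simp only [hψdef, ContinuousLinearMap.smul_apply, hg₀e]
    field_simp
    simp [RCLike.ofReal_real_eq_id, hne]
  haveI : Fact ((1 : ENNReal) ≤ 1) := ⟨le_rfl⟩
  set Φ : Lp E 1 μ →L[ℝ] Lp ℝ 1 (μ.restrict S) :=
    (LpToLpRestrictCLM Ω ℝ ℝ μ 1 S).comp (ContinuousLinearMap.compLpL 1 μ ψ) with hΦdef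
  obtain ⟨J, hJ⟩ := exists_injective_clm_to_linfty (Lp ℝ 1 (μ.restrict S))
  set R : Lp E 1 μ →L[ℝ] lp (fun _ : ℕ => ℝ) ⊤ := J.comp Φ with hRdef
  set M : Submodule ℝ (lp (fun _ : ℕ => ℝ) ⊤) :=
    (LinearMap.range (J : Lp ℝ 1 (μ.restrict S) →ₗ[ℝ] lp (fun _ : ℕ => ℝ) ⊤)).topologicalClosure
    with hMdef
  haveI : CompleteSpace M := (Submodule.isClosed_topologicalClosure _).completeSpace_coe
  haveI : TopologicalSpace.SeparableSpace M := by
    refine TopologicalSpace.IsSeparable.separableSpace ?_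
    have hMc : (M : Set (lp (fun _ : ℕ => ℝ) ⊤)) =
        closure (Set.range (J : Lp ℝ 1 (μ.restrict S) → lp (fun _ : ℕ => ℝ) ⊤)) := by
      simp [hMdef, Submodule.topologicalClosure_coe, LinearMap.coe_range]
    rw [hMc]
    exact (isSeparable_range J.continuous).closure
  have hmemM : ∀ x : Lp E 1 μ, R x ∈ M :=
    fun x => Submodule.le_topologicalClosure _ (LinearMap.mem_range.mpr ⟨Φ x, rfl⟩)
  set T0 : Lp E 1 μ →L[ℝ] M := R.codRestrict M hmemM with hT0def
  haveI : TopologicalSpace.SeparableSpace (ULift.{u} M) :=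
    (Function.Surjective.denseRange (fun x => ⟨x.down, rfl⟩)).separableSpace
      continuous_uliftUp
  set T : Lp E 1 μ →L[ℝ] ULift.{u} M :=
    ((ContinuousLinearEquiv.ulift (R₁ := ℝ) (M₁ := M)).symm :
      M ≃L[ℝ] ULift.{u} M).toContinuousLinearMap.comp T0 with hTdef
  set K : Set (Lp E 1 μ) :=
    {f | ∃ A : Set Ω, MeasurableSet A ∧
      (f : Ω → E) =ᵐ[μ] ((A ∩ S).indicator fun _ => e)} with hKdef
  have h0K : (0 : Lp E 1 μ) ∈ K := by
    refine ⟨∅, MeasurableSet.empty, ?_⟩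
    simpa [Pi.zero_def] using Lp.coeFn_zero E 1 μ
  have hdec : Decomposable μ K := by
    rintro f ⟨A, hA, hf⟩ g ⟨B, hB, hg⟩ C hC h' h'eq
    refine ⟨(C ∩ A) ∪ (Cᶜ ∩ B), (hC.inter hA).union (hC.compl.inter hB), ?_⟩
    filter_upwards [h'eq, hf, hg] with ω h1 h2 h3
    rw [h1]
    by_cases hωC : ω ∈ C
    · rw [Set.piecewise_eq_of_mem _ _ _ hωC, h2]
      by_cases hωA : ω ∈ A <;> by_cases hωS : ω ∈ S <;>
        simp [Set.indicator_apply, hωA, hωS, hωC]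
    · rw [Set.piecewise_eq_of_notMem _ _ _ hωC, h3]
      by_cases hωB : ω ∈ B <;> by_cases hωS : ω ∈ S <;>
        simp [Set.indicator_apply, hωB, hωS, hωC]
  have hconv := h K ⟨0, h0K⟩ hdec (ULift.{u} M) T
  set f₁ : Lp E 1 μ := indicatorConstLp 1 hS (measure_ne_top μ S) e with hf₁def
  have hf₁K : f₁ ∈ K := by
    refine ⟨Set.univ, MeasurableSet.univ, ?_⟩
    rw [Set.univ_inter]
    exact indicatorConstLp_coeFn
  have hmid : (1/2 : ℝ) • T f₁ + (1/2 : ℝ) • T 0 ∈ T '' K :=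
    hconv (Set.mem_image_of_mem _ hf₁K) (Set.mem_image_of_mem _ h0K)
      (by norm_num) (by norm_num) (by norm_num)
  obtain ⟨k, hkK, hTk⟩ := hmid
  have hTk' : T k = T ((1/2 : ℝ) • f₁) := by
    rw [hTk, map_zero, smul_zero, add_zero]
    exact (T.map_smul _ _).symm
  -- peel off the injective layers
  have hRk : R k = R ((1/2 : ℝ) • f₁) := by
    have h0 : T0 k = T0 ((1/2 : ℝ) • f₁) := by
      have := congrArg (ContinuousLinearEquiv.ulift (R₁ := ℝ) (M₁ := M)) hTk'
      simpa [hTdef] using this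
    exact congrArg Subtype.val h0
  have hΦk : Φ k = Φ ((1/2 : ℝ) • f₁) := hJ (by simpa [hRdef] using hRk)
  obtain ⟨A, hA, hk⟩ := hkK
  -- compute both sides a.e. on S
  have hcoe1 : (Φ k : Ω → ℝ) =ᵐ[μ.restrict S]
      fun ω => ψ (((A ∩ S).indicator fun _ => e) ω) := by
    have e1 : (Φ k : Ω → ℝ) =ᵐ[μ.restrict S]
        ((ContinuousLinearMap.compLpL 1 μ ψ k : Lp ℝ 1 μ) : Ω → ℝ) :=
      LpToLpRestrictCLM_coeFn ℝ S _
    have e2 : ((ContinuousLinearMap.compLpL 1 μ ψ k : Lp ℝ 1 μ) : Ω → ℝ) =ᵐ[μ]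
        fun ω => ψ ((k : Ω → E) ω) := ContinuousLinearMap.coeFn_compLpL ψ k
    have e3 : (fun ω => ψ ((k : Ω → E) ω)) =ᵐ[μ]
        fun ω => ψ (((A ∩ S).indicator fun _ => e) ω) := hk.fun_comp ψ
    exact e1.trans (ae_restrict_of_ae (e2.trans e3))
  have hcoe2 : (Φ ((1/2 : ℝ) • f₁) : Ω → ℝ) =ᵐ[μ.restrict S]
      fun ω => ψ ((1/2 : ℝ) • (S.indicator fun _ => e) ω) := by
    have e1 : (Φ ((1/2 : ℝ) • f₁) : Ω → ℝ) =ᵐ[μ.restrict S]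
        ((ContinuousLinearMap.compLpL 1 μ ψ ((1/2 : ℝ) • f₁) : Lp ℝ 1 μ) : Ω → ℝ) :=
      LpToLpRestrictCLM_coeFn ℝ S _
    have e2 : ((ContinuousLinearMap.compLpL 1 μ ψ ((1/2 : ℝ) • f₁) : Lp ℝ 1 μ) : Ω → ℝ) =ᵐ[μ]
        fun ω => ψ (((1/2 : ℝ) • f₁ : Lp E 1 μ) ω) := ContinuousLinearMap.coeFn_compLpL ψ _
    have e3 : ((1/2 : ℝ) • f₁ : Lp E 1 μ) =ᵐ[μ] (1/2 : ℝ) • (f₁ : Ω → E) :=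
      Lp.coeFn_smul _ _
    have e4 : (f₁ : Ω → E) =ᵐ[μ] S.indicator fun _ => e := indicatorConstLp_coeFn
    have e5 : (fun ω => ψ (((1/2 : ℝ) • f₁ : Lp E 1 μ) ω)) =ᵐ[μ]
        fun ω => ψ ((1/2 : ℝ) • (S.indicator fun _ => e) ω) := by
      filter_upwards [e3, e4] with ω h3 h4
      rw [h3]
      simp only [Pi.smul_apply, h4]
    exact e1.trans (ae_restrict_of_ae (e2.trans e5))
  have heqae : (Φ k : Ω → ℝ) =ᵐ[μ.restrict S] (Φ ((1/2 : ℝ) • f₁) : Ω → ℝ) := by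
    rw [hΦk]
  have hfalse : ∀ᵐ ω ∂(μ.restrict S), False := by
    filter_upwards [hcoe1, hcoe2, heqae, ae_restrict_mem hS] with ω h1 h2 h3 hωS
    rw [h1, h2] at h3
    have hrhs : ψ ((1/2 : ℝ) • (S.indicator fun _ => e) ω) = 1/2 := by
      rw [Set.indicator_of_mem hωS, ψ.map_smul, hψe]
      norm_num
    by_cases hωA : ω ∈ A
    · have : ψ (((A ∩ S).indicator fun _ => e) ω) = 1 := by
        rw [Set.indicator_of_mem (Set.mem_inter hωA hωS), hψe]
      rw [this, hrhs] at h3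
      norm_num at h3
    · have : ψ (((A ∩ S).indicator fun _ => e) ω) = 0 := by
        rw [Set.indicator_of_notMem (fun hc => hωA hc.1), map_zero]
      rw [this, hrhs] at h3
      norm_num at h3
  have hzero : μ.restrict S Set.univ = 0 := by
    have := ae_iff.mp hfalse
    simpa using this
  rw [Measure.restrict_apply_univ] at hzero
  exact absurd hpos (by simp [hzero])
end
end
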